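/- arXiv:nlin/0503032 — 7 statements merged into one kernel-verified Lean document; each statement's English description precedes it below -/
import Mathlib

section
/- In the Dirac case the deformation takes the form Π_D = Π − ½ Σ_{i=1}^k X_i ∧ Z_i, i.e. for all covectors α, β ∈ V*: Π_D(α,β) = Π(α,β) − ½ Σ_{i=1}^k (α(X_i) β(Z_i) − α(Z_i) β(X_i)). -/
/-- In the Dirac case, Π_D = Π − ½ Σ_i X_i ∧ Z_i, i.e.
Π_D(α,β) = Π(α,β) − ½ Σ_i (α(X_i) β(Z_i) − α(Z_i) β(X_i)). -/
theorem stmt_3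
    (V : Type*) [AddCommGroup V] [Module ℝ V] [FiniteDimensional ℝ V]
    (k : ℕ)
    (Pi : Module.Dual ℝ V →ₗ[ℝ] V)
    (hskew : ∀ α β : Module.Dual ℝ V, α (Pi β) = - β (Pi α))
    (φ : Fin k → Module.Dual ℝ V)
    (M : Matrix (Fin k) (Fin k) ℝ)
    (hM : ∀ i j, M i j = φ i (Pi (φ j)))
    (hMinv : IsUnit M.det)
    (X : Fin k → V) (hX : ∀ i, X i = Pi (φ i))
    (Zv : Fin k → V) (hZ : ∀ i, Zv i = ∑ j, (M⁻¹ j i) • X j)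
    (S Z : Submodule ℝ V)
    (hS : S = ⨅ i, LinearMap.ker (φ i))
    (hZsub : Z = Submodule.span ℝ (Set.range X))
    (P : V →ₗ[ℝ] V)
    (hPmem : ∀ v : V, P v ∈ S)
    (hPid : ∀ v ∈ S, P v = v)
    (hPZ : ∀ v ∈ Z, P v = 0) :
    ∀ α β : Module.Dual ℝ V,
      (α.comp P) (Pi (β.comp P)) =
        α (Pi β) - (1 / 2) * ∑ i, (α (X i) * β (Zv i) - α (Zv i) * β (X i)) := by
  intro α β
  have hMM : M * M⁻¹ = 1 := Matrix.mul_nonsing_inv M hMinv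
  have hMM' : M⁻¹ * M = 1 := Matrix.nonsing_inv_mul M hMinv
  have hφX : ∀ j l, φ j (X l) = M j l := fun j l => by rw [hX, hM]
  have hφZ : ∀ j i, φ j (Zv i) = (1 : Matrix (Fin k) (Fin k) ℝ) j i := by
    intro j i
    rw [hZ]
    simp only [map_sum, map_smul, smul_eq_mul, hφX]
    rw [← hMM, Matrix.mul_apply]
    exact Finset.sum_congr rfl fun l _ => mul_comm _ _
  have hPv : ∀ v, P v = v - ∑ i, φ i v • Zv i := by
    intro v
    have hQZ : (∑ i, φ i v • Zv i) ∈ Z := by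
      rw [hZsub]
      refine Submodule.sum_mem _ fun i _ => Submodule.smul_mem _ _ ?_
      rw [hZ]
      exact Submodule.sum_mem _ fun j _ => Submodule.smul_mem _ _
        (Submodule.subset_span ⟨j, rfl⟩)
    have hmemS : v - ∑ i, φ i v • Zv i ∈ S := by
      rw [hS, Submodule.mem_iInf]
      intro j
      rw [LinearMap.mem_ker]
      simp only [map_sub, map_sum, map_smul, smul_eq_mul, hφZ]
      simp [Matrix.one_apply]
    calc P v = P (v - ∑ i, φ i v • Zv i) + P (∑ i, φ i v • Zv i) := by
          rw [← map_add, sub_add_cancel]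
      _ = v - ∑ i, φ i v • Zv i := by rw [hPid _ hmemS, hPZ _ hQZ, add_zero]
  -- the deformed covector
  have hPiβP : Pi (β.comp P) = Pi β - ∑ i, β (Zv i) • X i := by
    have hβP : β.comp P = β - ∑ i, β (Zv i) • φ i := by
      ext v
      simp only [LinearMap.comp_apply, hPv, map_sub, map_sum, map_smul,
        LinearMap.sub_apply, LinearMap.sum_apply, LinearMap.smul_apply, smul_eq_mul]
      congr 1
      exact Finset.sum_congr rfl fun i _ => mul_comm _ _
    rw [hβP]
    simp only [map_sub, map_sum, map_smul]
    congr 1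
    exact Finset.sum_congr rfl fun i _ => by rw [hX]
  have hαP : ∀ w, (α.comp P) w = α w - ∑ i, α (Zv i) * φ i w := by
    intro w
    simp only [LinearMap.comp_apply, hPv, map_sub, map_sum, map_smul, smul_eq_mul]
    congr 1
    exact Finset.sum_congr rfl fun i _ => mul_comm _ _
  -- abbreviations
  set a : Fin k → ℝ := fun i => α (X i) with ha
  set b : Fin k → ℝ := fun i => β (X i) with hb
  have hφPiβ : ∀ i, φ i (Pi β) = - b i := fun i => by
    rw [hskew, hb]; simp [hX]
  -- α(Z i) in terms of a
  have hαZ : ∀ i, α (Zv i) = ∑ l, M⁻¹ l i * a l := fun i => by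
    rw [hZ]; simp; rfl
  have hβZ : ∀ i, β (Zv i) = ∑ l, M⁻¹ l i * b l := fun i => by
    rw [hZ]; simp; rfl
  -- ∑_i α(Z i) * M i j = a j
  have hsum1 : ∀ j, ∑ i, α (Zv i) * M i j = a j := by
    intro j
    simp only [hαZ, Finset.sum_mul]
    rw [Finset.sum_comm]
    have : ∀ l, ∑ i, M⁻¹ l i * a l * M i j = a l * (M⁻¹ * M) l j := by
      intro l
      rw [Matrix.mul_apply, Finset.mul_sum]
      exact Finset.sum_congr rfl fun i _ => by ring
    simp only [this, hMM', Matrix.one_apply]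
    simp
  -- skew-symmetry of M⁻¹
  have hMskew : M.transpose = -M := by
    ext i j
    simp only [Matrix.transpose_apply, Matrix.neg_apply, hM]
    exact hskew _ _
  have hMinvskew : (M⁻¹).transpose = -M⁻¹ := by
    rw [Matrix.transpose_nonsing_inv, hMskew]
    refine Matrix.inv_eq_right_inv ?_
    rw [Matrix.neg_mul, Matrix.mul_neg, neg_neg, hMM]
  have hMinvskew' : ∀ i j, M⁻¹ j i = - M⁻¹ i j := by
    intro i j
    have := congrFun (congrFun hMinvskew i) j
    simpa [Matrix.transpose_apply] using this
  -- the antisymmetry of the wedge sum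
  have hanti : ∑ i, a i * β (Zv i) = - ∑ i, α (Zv i) * b i := by
    simp only [hαZ, hβZ, Finset.mul_sum, Finset.sum_mul, ← Finset.sum_neg_distrib]
    rw [Finset.sum_comm]
    refine Finset.sum_congr rfl fun i _ => Finset.sum_congr rfl fun l _ => ?_
    rw [hMinvskew' i l]
    ring
  -- main computation
  rw [hαP, hPiβP]
  simp only [map_sub, map_sum, map_smul, smul_eq_mul]
  have hφexp : ∀ i, φ i (Pi β) - ∑ j, β (Zv j) * φ i (X j)
      = - b i - ∑ j, β (Zv j) * M i j := by
    intro i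
    rw [hφPiβ]
    simp only [hφX]
  simp only [hφexp]
  have hlast : ∑ i, α (Zv i) * (- b i - ∑ j, β (Zv j) * M i j)
      = - ∑ i, α (Zv i) * b i - ∑ j, β (Zv j) * a j := by
    have : ∀ i, α (Zv i) * (- b i - ∑ j, β (Zv j) * M i j)
        = - (α (Zv i) * b i) - ∑ j, β (Zv j) * (α (Zv i) * M i j) := by
      intro i
      rw [mul_sub, Finset.mul_sum]
      congr 1
      · ring
      · exact Finset.sum_congr rfl fun j _ => by ring
    simp only [this, Finset.sum_sub_distrib, Finset.sum_neg_distrib]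
    congr 1
    rw [Finset.sum_comm]
    refine Finset.sum_congr rfl fun j _ => ?_
    rw [← Finset.mul_sum, hsum1]
  rw [hlast]
  have hexp : ∑ i, (a i * β (Zv i) - α (Zv i) * b i) = - 2 * ∑ i, α (Zv i) * b i := by
    rw [Finset.sum_sub_distrib, hanti]; ring
  have hlhsβ : ∀ i, α (X i) = a i := fun i => rfl
  have hlhsb : ∀ i, β (X i) = b i := fun i => rfl
  simp only [ha, hb] at *
  rw [hexp]
  ring
end

section
/- In the Dirac case the deformed bivector is given by the Dirac bracket formula: for all covectors α, β ∈ V*, Π_D(α,β) = Π(α,β) − Σ_{i,j=1}^k Π(α,φ_i) (M⁻¹)_{ij} Π(φ_j,β), where Π(α,φ_i) = α(X_i) and Π(φ_j,β) = −β(X_j). -/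
/-!
The vector `Π(β ∘ P)` already lies in `S`, because `φₗ(Π(β ∘ P)) = -β(P Xₗ) = 0`; hence
`Π_D(α, β) = α(Π(β ∘ P)) = -β(P(Π α))`. On the other hand `P` is explicit:
`P v = v - ∑ᵢ cᵢ Xᵢ` with `c = M⁻¹ (φⱼ v)ⱼ`, the unique correction landing in `S`.
Substituting and using that `M⁻¹` is skew along with `M` gives the Dirac bracket.
-/

open Module Submodule Matrix

theorem Matrix.inv_transpose_eq_neg_of_transpose_eq_neg {n R : Type*} [Fintype n] [DecidableEq n]
    [CommRing R] {M : Matrix n n R} (hM : Mᵀ = -M) (hdet : IsUnit M.det) :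
    M⁻¹ᵀ = -M⁻¹ := by
  rw [transpose_nonsing_inv, hM]
  exact inv_eq_right_inv (by rw [neg_mul_neg, mul_nonsing_inv M hdet])

section Dirac

variable {R V : Type*} [CommRing R] [AddCommGroup V] [Module R V] {k : ℕ}

theorem LinearMap.apply_eq_sub_sum_mulVec_inv {φ : Fin k → Dual R V} {X : Fin k → V}
    {M : Matrix (Fin k) (Fin k) R} (hM : ∀ i j, M i j = φ i (X j)) (hdet : IsUnit M.det)
    {P : V →ₗ[R] V} (hPS : ∀ v ∈ ⨅ i, LinearMap.ker (φ i), P v = v)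
    (hPX : ∀ v ∈ span R (Set.range X), P v = 0) (v : V) :
    P v = v - ∑ i, (M⁻¹ *ᵥ fun j => φ j v) i • X i := by
  set c := M⁻¹ *ᵥ fun j => φ j v
  have hspan : ∑ i, c i • X i ∈ span R (Set.range X) :=
    sum_mem fun i _ => smul_mem _ _ (subset_span ⟨i, rfl⟩)
  have hker : v - ∑ i, c i • X i ∈ ⨅ i, LinearMap.ker (φ i) := by
    simp only [mem_iInf, LinearMap.mem_ker, map_sub, map_sum, map_smul, smul_eq_mul]
    intro l
    have hMc : M *ᵥ c = fun j => φ j v := by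
      rw [mulVec_mulVec, mul_nonsing_inv M hdet, one_mulVec]
    have hl := congrFun hMc l
    simp only [mulVec, dotProduct, hM] at hl
    rw [← hl, sub_eq_zero]
    exact Finset.sum_congr rfl fun i _ => mul_comm _ _
  rw [← sub_add_cancel v (∑ i, c i • X i), map_add, hPS _ hker, hPX _ hspan, add_zero,
    sub_add_cancel]

theorem apply_comp_mem_iInf_ker_of_skew {Pi : Dual R V →ₗ[R] V}
    (hskew : ∀ α β : Dual R V, α (Pi β) = - β (Pi α)) {φ : Fin k → Dual R V}
    {P : V →ₗ[R] V} (hP : ∀ i, P (Pi (φ i)) = 0) (γ : Dual R V) :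
    Pi (γ ∘ₗ P) ∈ ⨅ i, LinearMap.ker (φ i) := by
  simp only [mem_iInf, LinearMap.mem_ker]
  intro i
  rw [hskew, LinearMap.comp_apply, hP, map_zero, neg_zero]

end Dirac

theorem stmt_4_general
    (V : Type*) [AddCommGroup V] [Module ℝ V]
    (k : ℕ)
    (Pi : Module.Dual ℝ V →ₗ[ℝ] V)
    (hskew : ∀ α β : Module.Dual ℝ V, α (Pi β) = - β (Pi α))
    (φ : Fin k → Module.Dual ℝ V)
    (M : Matrix (Fin k) (Fin k) ℝ)
    (hM : ∀ i j, M i j = φ i (Pi (φ j)))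
    (hMinv : IsUnit M.det)
    (X : Fin k → V) (hX : ∀ i, X i = Pi (φ i))
    (S Z : Submodule ℝ V)
    (hS : S = ⨅ i, LinearMap.ker (φ i))
    (hZsub : Z = Submodule.span ℝ (Set.range X))
    (P : V →ₗ[ℝ] V)
    (hPid : ∀ v ∈ S, P v = v)
    (hPZ : ∀ v ∈ Z, P v = 0) :
    (∀ α β : Module.Dual ℝ V,
      (α.comp P) (Pi (β.comp P)) =
        α (Pi β) - ∑ i, ∑ j, α (Pi (φ i)) * (M⁻¹ i j) * (φ j (Pi β))) ∧
    (∀ (α : Module.Dual ℝ V) (i : Fin k), α (Pi (φ i)) = α (X i)) ∧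
    (∀ (β : Module.Dual ℝ V) (j : Fin k), φ j (Pi β) = - β (X j)) := by
  obtain rfl : X = fun i => Pi (φ i) := funext hX
  subst hS hZsub
  refine ⟨fun α β => ?_, fun _ _ => rfl, fun _ _ => hskew _ _⟩
  have hPX : ∀ i, P (Pi (φ i)) = 0 := fun i => hPZ _ (subset_span ⟨i, rfl⟩)
  have hinv : M⁻¹ᵀ = -M⁻¹ := M.inv_transpose_eq_neg_of_transpose_eq_neg
    (by ext i j; rw [transpose_apply, neg_apply, hM, hM, hskew]) hMinv
  calc (α ∘ₗ P) (Pi (β ∘ₗ P)) = α (Pi (β ∘ₗ P)) := by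
        rw [LinearMap.comp_apply, hPid _ (apply_comp_mem_iInf_ker_of_skew hskew hPX β)]
    _ = - β (P (Pi α)) := hskew _ _
    _ = α (Pi β) + (M⁻¹ *ᵥ fun j => φ j (Pi α)) ⬝ᵥ fun i => β (Pi (φ i)) := by
        rw [P.apply_eq_sub_sum_mulVec_inv hM hMinv hPid hPZ, map_sub, map_sum, hskew α β]
        simp only [map_smul, smul_eq_mul, dotProduct]
        ring
    _ = α (Pi β) - (fun i => α (Pi (φ i))) ⬝ᵥ (M⁻¹ *ᵥ fun j => φ j (Pi β)) := by
        have ha : (fun j => φ j (Pi α)) = -fun j => α (Pi (φ j)) := funext fun j => hskew _ _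
        have hb : (fun j => β (Pi (φ j))) = -fun j => φ j (Pi β) := funext fun j => hskew _ _
        rw [← vecMul_transpose, ← dotProduct_mulVec, hinv, ha, hb, neg_mulVec, mulVec_neg,
          neg_neg, neg_dotProduct, ← sub_eq_add_neg]
    _ = _ := by simp only [dotProduct, mulVec, Finset.mul_sum, mul_assoc]

/-- In the Dirac case the deformed bivector is given by the Dirac bracket
formula: Π_D(α,β) = Π(α,β) − Σ_{i,j} Π(α,φ_i)(M⁻¹)_{ij}Π(φ_j,β),
where Π(α,φ_i) = α(X_i) and Π(φ_j,β) = −β(X_j). -/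
theorem stmt_4
    (V : Type*) [AddCommGroup V] [Module ℝ V] [FiniteDimensional ℝ V]
    (k : ℕ)
    (Pi : Module.Dual ℝ V →ₗ[ℝ] V)
    (hskew : ∀ α β : Module.Dual ℝ V, α (Pi β) = - β (Pi α))
    (φ : Fin k → Module.Dual ℝ V)
    (M : Matrix (Fin k) (Fin k) ℝ)
    (hM : ∀ i j, M i j = φ i (Pi (φ j)))
    (hMinv : IsUnit M.det)
    (X : Fin k → V) (hX : ∀ i, X i = Pi (φ i))
    (Zv : Fin k → V) (hZ : ∀ i, Zv i = ∑ j, (M⁻¹ j i) • X j)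
    (S Z : Submodule ℝ V)
    (hS : S = ⨅ i, LinearMap.ker (φ i))
    (hZsub : Z = Submodule.span ℝ (Set.range X))
    (P : V →ₗ[ℝ] V)
    (hPmem : ∀ v : V, P v ∈ S)
    (hPid : ∀ v ∈ S, P v = v)
    (hPZ : ∀ v ∈ Z, P v = 0) :
    (∀ α β : Module.Dual ℝ V,
      (α.comp P) (Pi (β.comp P)) =
        α (Pi β) - ∑ i, ∑ j, α (Pi (φ i)) * (M⁻¹ i j) * (φ j (Pi β))) ∧
    (∀ (α : Module.Dual ℝ V) (i : Fin k), α (Pi (φ i)) = α (X i)) ∧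
    (∀ (β : Module.Dual ℝ V) (j : Fin k), φ j (Pi β) = - β (X j)) :=
  stmt_4_general V k Pi hskew φ M hM hMinv X hX S Z hS hZsub P hPid hPZ
end

section
/- The Dirac bracket {·,·}_D is again a Poisson bracket on A: it is additive in each argument, antisymmetric ({F,G}_D = −{G,F}_D), satisfies the Leibniz rule {F, G·H}_D = {F,G}_D·H + G·{F,H}_D, and satisfies the Jacobi identity {{F,G}_D, H}_D + {{G,H}_D, F}_D + {{H,F}_D, G}_D = 0 for all F, G, H ∈ A. -/
/-- The Dirac bracket is again a Poisson bracket: additive in each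
argument, antisymmetric, Leibniz, and satisfies the Jacobi identity. -/
theorem stmt_5
    (A : Type*) [CommRing A] (k : ℕ)
    (br : A → A → A)
    (hadd₁ : ∀ F G H : A, br (F + G) H = br F H + br G H)
    (hadd₂ : ∀ F G H : A, br F (G + H) = br F G + br F H)
    (hanti : ∀ F G : A, br F G = - br G F)
    (hleib : ∀ F G H : A, br F (G * H) = br F G * H + G * br F H)
    (hjac : ∀ F G H : A, br (br F G) H + br (br G H) F + br (br H F) G = 0)
    (φ : Fin k → A)
    (C : Matrix (Fin k) (Fin k) A)
    (hC : ∀ i j, C i j = br (φ i) (φ j))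
    (hCinv : IsUnit C.det)
    (D : A → A → A)
    (hD : ∀ F G : A, D F G = br F G - ∑ i, ∑ j, br F (φ i) * (C⁻¹ i j) * br (φ j) G) :
    (∀ F G H : A, D (F + G) H = D F H + D G H) ∧
    (∀ F G H : A, D F (G + H) = D F G + D F H) ∧
    (∀ F G : A, D F G = - D G F) ∧
    (∀ F G H : A, D F (G * H) = D F G * H + G * D F H) ∧
    (∀ F G H : A, D (D F G) H + D (D G H) F + D (D H F) G = 0) := by
  classical
  -- basic consequences of the Poisson bracket axioms
  have hzr : ∀ X : A, br X 0 = 0 := by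
    intro X
    have h := hadd₂ X 0 0
    rw [add_zero] at h
    exact (right_eq_add.mp h)
  have h1r : ∀ X : A, br X 1 = 0 := by
    intro X
    have h := hleib X 1 1
    rw [mul_one, mul_one, one_mul] at h
    exact (right_eq_add.mp h)
  have hneg₂ : ∀ X Y : A, br X (-Y) = - br X Y := by
    intro X Y
    have h := hadd₂ X Y (-Y)
    rw [add_neg_cancel, hzr] at h
    exact eq_neg_of_add_eq_zero_right h.symm
  have hneg₁ : ∀ X Y : A, br (-X) Y = - br X Y := by
    intro X Y
    rw [hanti, hneg₂, neg_neg, hanti Y X]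
  have hleib₁ : ∀ F G H : A, br (F * G) H = br F H * G + F * br G H := by
    intro F G H
    rw [hanti, hleib, hanti H F, hanti H G]
    ring
  have br_sum₂ : ∀ (X : A) (s : Finset (Fin k)) (f : Fin k → A),
      br X (∑ i ∈ s, f i) = ∑ i ∈ s, br X (f i) := by
    intro X s f
    induction s using Finset.cons_induction with
    | empty => simpa using hzr X
    | cons a s ha ih => rw [Finset.sum_cons, hadd₂, ih, Finset.sum_cons]
  have br_sum₁ : ∀ (X : A) (s : Finset (Fin k)) (f : Fin k → A),
      br (∑ i ∈ s, f i) X = ∑ i ∈ s, br (f i) X := by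
    intro X s f
    rw [hanti, br_sum₂, ← Finset.sum_neg_distrib]
    exact Finset.sum_congr rfl fun i _ => (hanti (f i) X).symm
  -- matrix facts
  have hMa : ∀ i j, C⁻¹ i j = -(C⁻¹ j i) := by
    have hT : C.transpose = -C := by
      ext i j
      rw [Matrix.transpose_apply, Matrix.neg_apply, hC, hC]
      exact hanti _ _
    have h2 : (C⁻¹).transpose = -(C⁻¹) := by
      rw [Matrix.transpose_nonsing_inv, hT]
      exact Matrix.inv_eq_right_inv
        (by rw [Matrix.neg_mul, Matrix.mul_neg, neg_neg, Matrix.mul_nonsing_inv C hCinv])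
    intro i j
    have h3 := congrFun (congrFun h2 j) i
    simpa [Matrix.transpose_apply, Matrix.neg_apply] using h3
  have hCMe : ∀ i j, (∑ a, C i a * C⁻¹ a j) = if i = j then (1:A) else 0 := by
    intro i j
    have h := Matrix.mul_nonsing_inv C hCinv
    have h' := congrFun (congrFun h i) j
    rw [Matrix.mul_apply] at h'
    rw [h', Matrix.one_apply]
  have hMCe : ∀ i j, (∑ a, C⁻¹ i a * C a j) = if i = j then (1:A) else 0 := by
    intro i j
    have h := Matrix.nonsing_inv_mul C hCinv
    have h' := congrFun (congrFun h i) j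
    rw [Matrix.mul_apply] at h'
    rw [h', Matrix.one_apply]
  -- differentiation of the inverse matrix
  have dM : ∀ (Z : A) (p j : Fin k), br Z (C⁻¹ p j)
      = -∑ a, ∑ c, C⁻¹ p a * br Z (br (φ a) (φ c)) * C⁻¹ c j := by
    intro Z p j
    have h1 : ∀ i, ∑ a, C i a * br Z (C⁻¹ a j) = - ∑ a, br Z (C i a) * C⁻¹ a j := by
      intro i
      have h := congrArg (br Z) (hCMe i j)
      rw [br_sum₂] at h
      have h2 : ∑ a, br Z (C i a * C⁻¹ a j)
          = ∑ a, (br Z (C i a) * C⁻¹ a j + C i a * br Z (C⁻¹ a j)) :=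
        Finset.sum_congr rfl fun a _ => hleib Z _ _
      rw [h2, Finset.sum_add_distrib] at h
      have h3 : br Z (if i = j then (1:A) else 0) = 0 := by
        by_cases hij : i = j
        · simp [hij, h1r]
        · simp [hij, hzr]
      rw [h3] at h
      linear_combination h
    calc br Z (C⁻¹ p j)
        = ∑ a, (if p = a then (1:A) else 0) * br Z (C⁻¹ a j) := by simp
      _ = ∑ a, (∑ i, C⁻¹ p i * C i a) * br Z (C⁻¹ a j) := by
          refine Finset.sum_congr rfl fun a _ => ?_
          rw [hMCe p a]
      _ = ∑ a, ∑ i, C⁻¹ p i * (C i a * br Z (C⁻¹ a j)) := by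
          refine Finset.sum_congr rfl fun a _ => ?_
          rw [Finset.sum_mul]
          exact Finset.sum_congr rfl fun i _ => by ring
      _ = ∑ i, ∑ a, C⁻¹ p i * (C i a * br Z (C⁻¹ a j)) := Finset.sum_comm
      _ = ∑ i, C⁻¹ p i * ∑ a, C i a * br Z (C⁻¹ a j) := by
          refine Finset.sum_congr rfl fun i _ => ?_
          rw [Finset.mul_sum]
      _ = ∑ i, C⁻¹ p i * (- ∑ a, br Z (C i a) * C⁻¹ a j) := by
          refine Finset.sum_congr rfl fun i _ => ?_
          rw [h1 i]
      _ = -∑ a, ∑ c, C⁻¹ p a * br Z (br (φ a) (φ c)) * C⁻¹ c j := by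
          rw [← Finset.sum_neg_distrib]
          refine Finset.sum_congr rfl fun i _ => ?_
          rw [mul_neg]
          congr 1
          rw [Finset.mul_sum]
          refine Finset.sum_congr rfl fun c _ => ?_
          rw [hC]
          ring
  -- local abbreviations
  obtain ⟨bb, hbb⟩ : ∃ f : A → Fin k → A, ∀ X i, f X i = br X (φ i) :=
    ⟨_, fun _ _ => rfl⟩
  obtain ⟨Bt, hBt⟩ : ∃ f : A → Fin k → A, ∀ X a, f X a = ∑ i, bb X i * C⁻¹ i a :=
    ⟨_, fun _ _ => rfl⟩
  obtain ⟨T, hT⟩ : ∃ f : A → A → A, ∀ X Y, f X Y = ∑ i, ∑ j, bb X i * C⁻¹ i j * bb Y j :=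
    ⟨_, fun _ _ => rfl⟩
  obtain ⟨A2, hA2⟩ : ∃ f : A → A → A → A,
      ∀ X Y Z, f X Y Z = ∑ i, ∑ j, br X (bb Y i) * C⁻¹ i j * bb Z j :=
    ⟨_, fun _ _ _ => rfl⟩
  obtain ⟨QQ, hQQ⟩ : ∃ f : A → A → A → A,
      ∀ X Y Z, f X Y Z = ∑ a, ∑ c, Bt X a * br (br (φ a) (φ c)) Z * Bt Y c :=
    ⟨_, fun _ _ _ => rfl⟩
  obtain ⟨SW, hSW⟩ : ∃ f : A → A → A → A,
      ∀ X Y Z, f X Y Z = ∑ m, ∑ i, Bt X m * Bt Y i * br (bb Z i) (φ m) :=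
    ⟨_, fun _ _ _ => rfl⟩
  obtain ⟨SK, hSK⟩ : ∃ f : A → A → A → A,
      ∀ X Y Z, f X Y Z = ∑ m, ∑ a, ∑ c, Bt X m * Bt Y a * Bt Z c * br (br (φ a) (φ c)) (φ m) :=
    ⟨_, fun _ _ _ => rfl⟩
  -- D in terms of T
  have hD' : ∀ F G, D F G = br F G + T F G := by
    intro F G
    rw [hD, hT, sub_eq_add_neg]
    congr 1
    rw [← Finset.sum_neg_distrib]
    refine Finset.sum_congr rfl fun i _ => ?_
    rw [← Finset.sum_neg_distrib]
    refine Finset.sum_congr rfl fun j _ => ?_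
    rw [hbb, hbb, hanti (φ j) G]
    ring
  -- properties of T
  have hTadd₁ : ∀ X Y Z, T (X + Y) Z = T X Z + T Y Z := by
    intro X Y Z
    rw [hT, hT, hT, ← Finset.sum_add_distrib]
    refine Finset.sum_congr rfl fun i _ => ?_
    rw [← Finset.sum_add_distrib]
    refine Finset.sum_congr rfl fun j _ => ?_
    simp only [hbb]
    rw [hadd₁]
    ring
  have hTadd₂ : ∀ X Y Z, T X (Y + Z) = T X Y + T X Z := by
    intro X Y Z
    rw [hT, hT, hT, ← Finset.sum_add_distrib]
    refine Finset.sum_congr rfl fun i _ => ?_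
    rw [← Finset.sum_add_distrib]
    refine Finset.sum_congr rfl fun j _ => ?_
    simp only [hbb]
    rw [hadd₁]
    ring
  have hTanti : ∀ F G, T F G = - T G F := by
    intro F G
    rw [hT F G, hT G F, Finset.sum_comm, ← Finset.sum_neg_distrib]
    refine Finset.sum_congr rfl fun x _ => ?_
    rw [← Finset.sum_neg_distrib]
    refine Finset.sum_congr rfl fun y _ => ?_
    rw [hMa y x]
    ring
  have hTleib₂ : ∀ F G H, T F (G * H) = T F G * H + G * T F H := by
    intro F G H
    rw [hT, hT, hT, Finset.sum_mul, Finset.mul_sum, ← Finset.sum_add_distrib]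
    refine Finset.sum_congr rfl fun i _ => ?_
    rw [Finset.sum_mul, Finset.mul_sum, ← Finset.sum_add_distrib]
    refine Finset.sum_congr rfl fun j _ => ?_
    rw [hbb F, hbb (G * H), hbb G, hbb H, hleib₁]
    ring
  -- auxiliary Jacobi-style identities
  have hW : ∀ (X : A) (i m : Fin k),
      br (bb X i) (φ m) - br (bb X m) (φ i) = - br (br (φ i) (φ m)) X := by
    intro X i m
    have h := hjac X (φ i) (φ m)
    have h2 : br (br (φ m) X) (φ i) = - br (br X (φ m)) (φ i) := by
      rw [hanti (φ m) X, hneg₁]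
    rw [hbb, hbb]
    linear_combination h - h2
  have hco : ∀ (F G : A) (m : Fin k),
      br (br F G) (φ m) = br F (bb G m) - br G (bb F m) := by
    intro F G m
    have h := hjac F G (φ m)
    have e1 : br (br G (φ m)) F = - br F (br G (φ m)) := hanti _ _
    have e2 : br (br (φ m) F) G = br G (br F (φ m)) := by
      rw [hanti (φ m) F, hneg₁, hanti (br F (φ m)) G, neg_neg]
    rw [hbb, hbb]
    linear_combination h - e1 - e2
  -- expansion lemmas
  have hF2 : ∀ F G Z, T (br F G) Z = A2 F G Z - A2 G F Z := by
    intro F G Z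
    rw [hT, hA2, hA2, ← Finset.sum_sub_distrib]
    refine Finset.sum_congr rfl fun i _ => ?_
    rw [← Finset.sum_sub_distrib]
    refine Finset.sum_congr rfl fun j _ => ?_
    rw [hbb (br F G) i, hco F G i]
    ring
  have hF1 : ∀ F G Z, br (T F G) Z = - A2 Z F G + A2 Z G F + QQ F G Z := by
    intro F G Z
    have t1 : ∑ i, ∑ j, br (bb F i) Z * C⁻¹ i j * bb G j = - A2 Z F G := by
      rw [hA2, ← Finset.sum_neg_distrib]
      refine Finset.sum_congr rfl fun i _ => ?_
      rw [← Finset.sum_neg_distrib]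
      refine Finset.sum_congr rfl fun j _ => ?_
      rw [hanti (bb F i) Z]
      ring
    have t3 : ∑ i, ∑ j, bb F i * C⁻¹ i j * br (bb G j) Z = A2 Z G F := by
      rw [hA2]
      rw [show (∑ i, ∑ j, bb F i * C⁻¹ i j * br (bb G j) Z)
          = ∑ j, ∑ i, bb F i * C⁻¹ i j * br (bb G j) Z from Finset.sum_comm]
      refine Finset.sum_congr rfl fun x _ => ?_
      refine Finset.sum_congr rfl fun y _ => ?_
      rw [hMa y x, hanti (bb G x) Z]
      ring
    have t2 : ∑ i, ∑ j, bb F i * br (C⁻¹ i j) Z * bb G j = QQ F G Z := by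
      have e1 : ∀ i j : Fin k, bb F i * br (C⁻¹ i j) Z * bb G j
          = ∑ a, ∑ c, bb F i * C⁻¹ i a * br Z (br (φ a) (φ c)) * C⁻¹ c j * bb G j := by
        intro i j
        rw [hanti (C⁻¹ i j) Z, dM Z i j, neg_neg, Finset.mul_sum, Finset.sum_mul]
        refine Finset.sum_congr rfl fun a _ => ?_
        rw [Finset.mul_sum, Finset.sum_mul]
        refine Finset.sum_congr rfl fun c _ => ?_
        ring
      calc ∑ i, ∑ j, bb F i * br (C⁻¹ i j) Z * bb G j
          = ∑ i, ∑ j, ∑ a, ∑ c,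
              bb F i * C⁻¹ i a * br Z (br (φ a) (φ c)) * C⁻¹ c j * bb G j :=
            Finset.sum_congr rfl fun i _ => Finset.sum_congr rfl fun j _ => e1 i j
        _ = ∑ i, ∑ a, ∑ j, ∑ c,
              bb F i * C⁻¹ i a * br Z (br (φ a) (φ c)) * C⁻¹ c j * bb G j :=
            Finset.sum_congr rfl fun i _ => Finset.sum_comm
        _ = ∑ a, ∑ i, ∑ j, ∑ c,
              bb F i * C⁻¹ i a * br Z (br (φ a) (φ c)) * C⁻¹ c j * bb G j :=
            Finset.sum_comm
        _ = ∑ a, ∑ i, ∑ c, ∑ j,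
              bb F i * C⁻¹ i a * br Z (br (φ a) (φ c)) * C⁻¹ c j * bb G j :=
            Finset.sum_congr rfl fun a _ => Finset.sum_congr rfl fun i _ => Finset.sum_comm
        _ = ∑ a, ∑ c, ∑ i, ∑ j,
              bb F i * C⁻¹ i a * br Z (br (φ a) (φ c)) * C⁻¹ c j * bb G j :=
            Finset.sum_congr rfl fun a _ => Finset.sum_comm
        _ = QQ F G Z := by
            rw [hQQ]
            refine Finset.sum_congr rfl fun a _ => ?_
            refine Finset.sum_congr rfl fun c _ => ?_
            rw [hBt, hBt, Finset.sum_mul, Finset.sum_mul]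
            refine Finset.sum_congr rfl fun i _ => ?_
            rw [Finset.mul_sum]
            refine Finset.sum_congr rfl fun j _ => ?_
            rw [hanti Z (br (φ a) (φ c)), hMa c j]
            ring
    calc br (T F G) Z
        = ∑ i, ∑ j, br (bb F i * C⁻¹ i j * bb G j) Z := by
          rw [hT, br_sum₁]
          exact Finset.sum_congr rfl fun i _ => br_sum₁ Z _ _
      _ = ∑ i, ∑ j, (br (bb F i) Z * C⁻¹ i j * bb G j
            + bb F i * br (C⁻¹ i j) Z * bb G j
            + bb F i * C⁻¹ i j * br (bb G j) Z) := by
          refine Finset.sum_congr rfl fun i _ => ?_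
          refine Finset.sum_congr rfl fun j _ => ?_
          rw [hleib₁, hleib₁]
          ring
      _ = (∑ i, ∑ j, br (bb F i) Z * C⁻¹ i j * bb G j)
            + (∑ i, ∑ j, bb F i * br (C⁻¹ i j) Z * bb G j)
            + (∑ i, ∑ j, bb F i * C⁻¹ i j * br (bb G j) Z) := by
          rw [← Finset.sum_add_distrib, ← Finset.sum_add_distrib]
          refine Finset.sum_congr rfl fun i _ => ?_
          rw [← Finset.sum_add_distrib, ← Finset.sum_add_distrib]
      _ = - A2 Z F G + A2 Z G F + QQ F G Z := by
          rw [t1, t2, t3]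
          ring
  have hTalt : ∀ X Z, T X Z = -∑ m, bb X m * Bt Z m := by
    intro X Z
    rw [hT, ← Finset.sum_neg_distrib]
    refine Finset.sum_congr rfl fun m _ => ?_
    rw [hBt, Finset.mul_sum, ← Finset.sum_neg_distrib]
    refine Finset.sum_congr rfl fun j _ => ?_
    rw [hMa m j]
    ring
  have hA2phi : ∀ (m : Fin k) (Y W : A),
      A2 (φ m) Y W = ∑ i, br (bb Y i) (φ m) * Bt W i := by
    intro m Y W
    rw [hA2]
    refine Finset.sum_congr rfl fun i _ => ?_
    rw [hBt, Finset.mul_sum]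
    refine Finset.sum_congr rfl fun j _ => ?_
    rw [hanti (φ m) (bb Y i), hMa i j]
    ring
  have hF3 : ∀ F G Z, T (T F G) Z = SW Z G F - SW Z F G - SK Z F G := by
    intro F G Z
    rw [hTalt (T F G) Z, hSW, hSW, hSK,
      ← Finset.sum_sub_distrib, ← Finset.sum_sub_distrib, ← Finset.sum_neg_distrib]
    refine Finset.sum_congr rfl fun m _ => ?_
    have hb : bb (T F G) m = - A2 (φ m) F G + A2 (φ m) G F + QQ F G (φ m) := by
      rw [hbb]
      exact hF1 F G (φ m)
    rw [hb, hA2phi, hA2phi, hQQ]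
    have x1 : (∑ i, br (bb F i) (φ m) * Bt G i) * Bt Z m
        = ∑ i, Bt Z m * Bt G i * br (bb F i) (φ m) := by
      rw [Finset.sum_mul]
      exact Finset.sum_congr rfl fun i _ => by ring
    have x2 : (∑ i, br (bb G i) (φ m) * Bt F i) * Bt Z m
        = ∑ i, Bt Z m * Bt F i * br (bb G i) (φ m) := by
      rw [Finset.sum_mul]
      exact Finset.sum_congr rfl fun i _ => by ring
    have x3 : (∑ a, ∑ c, Bt F a * br (br (φ a) (φ c)) (φ m) * Bt G c) * Bt Z m
        = ∑ a, ∑ c, Bt Z m * Bt F a * Bt G c * br (br (φ a) (φ c)) (φ m) := by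
      rw [Finset.sum_mul]
      refine Finset.sum_congr rfl fun a _ => ?_
      rw [Finset.sum_mul]
      exact Finset.sum_congr rfl fun c _ => by ring
    linear_combination x1 - x2 - x3
  -- the two remaining cancellation identities
  have hr1 : ∀ X Y Z, SW X Y Z - SW Y X Z = - QQ Y X Z := by
    intro X Y Z
    rw [hSW, hSW, hQQ]
    rw [show (∑ m, ∑ i, Bt Y m * Bt X i * br (bb Z i) (φ m))
        = ∑ m, ∑ i, Bt Y i * Bt X m * br (bb Z m) (φ i) from Finset.sum_comm]
    rw [show (∑ a, ∑ c, Bt Y a * br (br (φ a) (φ c)) Z * Bt X c)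
        = ∑ c, ∑ a, Bt Y a * br (br (φ a) (φ c)) Z * Bt X c from Finset.sum_comm]
    rw [← Finset.sum_sub_distrib, ← Finset.sum_neg_distrib]
    refine Finset.sum_congr rfl fun m _ => ?_
    rw [← Finset.sum_sub_distrib, ← Finset.sum_neg_distrib]
    refine Finset.sum_congr rfl fun i _ => ?_
    linear_combination (Bt X m * Bt Y i) * hW Z i m
  have hr2 : ∀ X Y Z, SK X Y Z + SK Y Z X + SK Z X Y = 0 := by
    intro H' F' G'
    rw [hSK, hSK, hSK]
    -- canonicalize each triple sum to the order (a, b, c) with coefficient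
    -- Bt F' a * Bt G' b * Bt H' c
    have c1 : (∑ m, ∑ a, ∑ c, Bt H' m * Bt F' a * Bt G' c * br (br (φ a) (φ c)) (φ m))
        = ∑ a, ∑ b, ∑ c, Bt F' a * Bt G' b * Bt H' c * br (br (φ a) (φ b)) (φ c) := by
      calc (∑ m, ∑ a, ∑ c, Bt H' m * Bt F' a * Bt G' c * br (br (φ a) (φ c)) (φ m))
          = ∑ a, ∑ m, ∑ c, Bt H' m * Bt F' a * Bt G' c * br (br (φ a) (φ c)) (φ m) :=
            Finset.sum_comm
        _ = ∑ a, ∑ c, ∑ m, Bt H' m * Bt F' a * Bt G' c * br (br (φ a) (φ c)) (φ m) :=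
            Finset.sum_congr rfl fun a _ => Finset.sum_comm
        _ = ∑ a, ∑ b, ∑ c, Bt F' a * Bt G' b * Bt H' c * br (br (φ a) (φ b)) (φ c) := by
            refine Finset.sum_congr rfl fun a _ => ?_
            refine Finset.sum_congr rfl fun b _ => ?_
            refine Finset.sum_congr rfl fun c _ => ?_
            ring
    have c2 : (∑ m, ∑ a, ∑ c, Bt F' m * Bt G' a * Bt H' c * br (br (φ a) (φ c)) (φ m))
        = ∑ a, ∑ b, ∑ c, Bt F' a * Bt G' b * Bt H' c * br (br (φ b) (φ c)) (φ a) := by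
      refine Finset.sum_congr rfl fun a _ => ?_
      refine Finset.sum_congr rfl fun b _ => ?_
      refine Finset.sum_congr rfl fun c _ => ?_
      ring
    have c3 : (∑ m, ∑ a, ∑ c, Bt G' m * Bt H' a * Bt F' c * br (br (φ a) (φ c)) (φ m))
        = ∑ a, ∑ b, ∑ c, Bt F' a * Bt G' b * Bt H' c * br (br (φ c) (φ a)) (φ b) := by
      calc (∑ m, ∑ a, ∑ c, Bt G' m * Bt H' a * Bt F' c * br (br (φ a) (φ c)) (φ m))
          = ∑ m, ∑ c, ∑ a, Bt G' m * Bt H' a * Bt F' c * br (br (φ a) (φ c)) (φ m) :=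
            Finset.sum_congr rfl fun m _ => Finset.sum_comm
        _ = ∑ c, ∑ m, ∑ a, Bt G' m * Bt H' a * Bt F' c * br (br (φ a) (φ c)) (φ m) :=
            Finset.sum_comm
        _ = ∑ a, ∑ b, ∑ c, Bt F' a * Bt G' b * Bt H' c * br (br (φ c) (φ a)) (φ b) := by
            refine Finset.sum_congr rfl fun a _ => ?_
            refine Finset.sum_congr rfl fun b _ => ?_
            refine Finset.sum_congr rfl fun c _ => ?_
            ring
    rw [c1, c2, c3, ← Finset.sum_add_distrib, ← Finset.sum_add_distrib]
    rw [show (0:A) = ∑ (a : Fin k), (0:A) by simp]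
    refine Finset.sum_congr rfl fun a _ => ?_
    rw [show (0:A) = ∑ (b : Fin k), (0:A) by simp]
    rw [← Finset.sum_add_distrib, ← Finset.sum_add_distrib]
    refine Finset.sum_congr rfl fun b _ => ?_
    rw [show (0:A) = ∑ (c : Fin k), (0:A) by simp]
    rw [← Finset.sum_add_distrib, ← Finset.sum_add_distrib]
    refine Finset.sum_congr rfl fun c _ => ?_
    linear_combination (Bt F' a * Bt G' b * Bt H' c) * hjac (φ a) (φ b) (φ c)
  -- assemble the five properties
  refine ⟨?_, ?_, ?_, ?_, ?_⟩
  · intro F G H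
    rw [hD', hD', hD', hadd₁, hTadd₁]
    ring
  · intro F G H
    rw [hD', hD', hD', hadd₂, hTadd₂]
    ring
  · intro F G
    rw [hD', hD', hanti F G, hTanti]
    ring
  · intro F G H
    rw [hD', hD', hD', hleib, hTleib₂]
    ring
  · intro F G H
    have exp : ∀ X Y Z, D (D X Y) Z
        = br (br X Y) Z + (br (T X Y) Z + (T (br X Y) Z + T (T X Y) Z)) := by
      intro X Y Z
      rw [hD' (D X Y) Z, hD' X Y, hadd₁, hTadd₁]
      ring
    rw [exp F G H, exp G H F, exp H F G,
      hF1 F G H, hF1 G H F, hF1 H F G,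
      hF2 F G H, hF2 G H F, hF2 H F G,
      hF3 F G H, hF3 G H F, hF3 H F G]
    linear_combination hjac F G H + hr1 H G F + hr1 F H G + hr1 G F H - hr2 H F G
end

section
/- In the Dirac case, the kernel of the deformed map Π_D : V* → V is exactly ker Π_D = ker Π + span{φ_1, …, φ_k}, and this sum of subspaces of V* is direct. -/
/-!
Let `Φ = (φᵢ)ᵢ : V → ℝᵏ` and let `Λ : ℝᵏ → V*` take linear combinations of the `φᵢ`. The Gram
identity `Φ ∘ Π ∘ Λ = M` with `M` invertible makes `Π` injective on `span φ`, which is the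
directness, and gives `V = S ⊕ Z` with `Z = Π (span φ)`, so `ker P = Z`. Since `α - α ∘ P` vanishes
on `S = ⋂ ker φᵢ`, it lies in `span φ`; hence `Π_D α = P (Π (α ∘ P))` vanishes iff
`Π (α ∘ P) ∈ Π (span φ)`, i.e. iff `α ∘ P`, equivalently `α`, lies in `ker Π + span φ`.
-/

open Module Submodule LinearMap

section KerRange

variable {R M N Q : Type*} [Ring R] [AddCommGroup M] [AddCommGroup N] [AddCommGroup Q]
  [Module R M] [Module R N] [Module R Q] {f : M →ₗ[R] N} {g : Q →ₗ[R] M}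

theorem LinearMap.disjoint_ker_range_of_injective_comp (h : Function.Injective (f ∘ₗ g)) :
    Disjoint (ker f) (range g) := by
  rw [disjoint_def]
  rintro _ hf ⟨w, rfl⟩
  rw [h (by simpa using hf : (f ∘ₗ g) w = (f ∘ₗ g) 0), map_zero]

theorem LinearMap.codisjoint_ker_range_of_surjective_comp (h : Function.Surjective (f ∘ₗ g)) :
    Codisjoint (ker f) (range g) := by
  rw [codisjoint_iff_exists_add_eq]
  intro v
  obtain ⟨w, hw⟩ := h (f v)
  exact ⟨v - g w, g w, by simp [← hw], mem_range_self g w, sub_add_cancel v (g w)⟩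

end KerRange

section Dirac

variable {𝕜 V ι : Type*} [Field 𝕜] [AddCommGroup V] [Module 𝕜 V]
  (Pi : Dual 𝕜 V →ₗ[𝕜] V) (φ : ι → Dual 𝕜 V)

theorem pi_comp_comp_linearCombination [Fintype ι] :
    LinearMap.pi φ ∘ₗ Pi ∘ₗ Fintype.linearCombination 𝕜 φ =
      (Matrix.of fun i j => φ i (Pi (φ j))).mulVecLin := by
  ext c i
  simp [Fintype.linearCombination_apply, Matrix.mulVec, dotProduct, mul_comm]

theorem disjoint_ker_span_of_isUnit [Fintype ι] [DecidableEq ι]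
    (hM : IsUnit (Matrix.of fun i j => φ i (Pi (φ j)))) :
    Disjoint (ker Pi) (span 𝕜 (Set.range φ)) := by
  rw [← Fintype.range_linearCombination]
  refine disjoint_ker_range_of_injective_comp ?_
  refine Function.Injective.of_comp (f := LinearMap.pi φ) ?_
  rw [← LinearMap.coe_comp, pi_comp_comp_linearCombination]
  exact Matrix.mulVec_injective_iff_isUnit.2 hM

theorem codisjoint_iInf_ker_map_span_of_isUnit [Fintype ι] [DecidableEq ι]
    (hM : IsUnit (Matrix.of fun i j => φ i (Pi (φ j)))) :
    Codisjoint (⨅ i, ker (φ i)) ((span 𝕜 (Set.range φ)).map Pi) := by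
  rw [← Fintype.range_linearCombination, ← range_comp, ← ker_pi]
  refine codisjoint_ker_range_of_surjective_comp ?_
  rw [pi_comp_comp_linearCombination]
  exact Matrix.mulVec_surjective_iff_isUnit.2 hM

variable {Pi φ} [Finite ι] {P : V →ₗ[𝕜] V}

theorem sub_dualMap_mem_span (hP : IsProj (⨅ i, ker (φ i)) P) (α : Dual 𝕜 V) :
    α - P.dualMap α ∈ span 𝕜 (Set.range φ) :=
  mem_span_of_iInf_ker_le_ker fun v hv => by simp [hP.map_id v hv]

theorem ker_comp_comp_dualMap (hP : IsProj (⨅ i, ker (φ i)) P)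
    (hker : ker P = (span 𝕜 (Set.range φ)).map Pi) :
    ker (P ∘ₗ Pi ∘ₗ P.dualMap) = ker Pi ⊔ span 𝕜 (Set.range φ) := by
  apply le_antisymm
  · intro α hα
    obtain ⟨δ, hδ, hPiδ⟩ : Pi (P.dualMap α) ∈ (span 𝕜 (Set.range φ)).map Pi := hker ▸ hα
    refine mem_sup.2 ⟨P.dualMap α - δ, by simp [hPiδ], δ + (α - P.dualMap α),
      add_mem hδ (sub_dualMap_mem_span hP α), by abel⟩
  · refine sup_le (fun α hα => ?_) (span_le.2 ?_)
    · have hγ : Pi (α - P.dualMap α) ∈ ker P :=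
        hker ▸ mem_map_of_mem (sub_dualMap_mem_span hP α)
      rw [mem_ker] at hα hγ ⊢
      simpa [hα] using hγ
    · rintro _ ⟨i, rfl⟩
      have hφP : P.dualMap (φ i) = 0 := LinearMap.ext fun v => mem_iInf _ |>.1 (hP.map_mem v) i
      simp [hφP]

end Dirac

theorem stmt_7_general
    (V : Type*) [AddCommGroup V] [Module ℝ V]
    (k : ℕ)
    (Pi : Module.Dual ℝ V →ₗ[ℝ] V)
    (φ : Fin k → Module.Dual ℝ V)
    (M : Matrix (Fin k) (Fin k) ℝ)
    (hM : ∀ i j, M i j = φ i (Pi (φ j)))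
    (hMinv : IsUnit M.det)
    (X : Fin k → V) (hX : ∀ i, X i = Pi (φ i))
    (S Z : Submodule ℝ V)
    (hS : S = ⨅ i, LinearMap.ker (φ i))
    (hZsub : Z = Submodule.span ℝ (Set.range X))
    (P : V →ₗ[ℝ] V)
    (hPmem : ∀ v : V, P v ∈ S)
    (hPid : ∀ v ∈ S, P v = v)
    (hPZ : ∀ v ∈ Z, P v = 0)
    (PiD : Module.Dual ℝ V →ₗ[ℝ] V)
    (hPiD : ∀ α : Module.Dual ℝ V, PiD α = P (Pi (α.comp P))) :
    LinearMap.ker PiD = LinearMap.ker Pi ⊔ Submodule.span ℝ (Set.range φ) ∧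
    LinearMap.ker Pi ⊓ Submodule.span ℝ (Set.range φ) = ⊥ := by
  have hGram : IsUnit (Matrix.of fun i j => φ i (Pi (φ j))) :=
    Matrix.ext hM ▸ (Matrix.isUnit_iff_isUnit_det M).2 hMinv
  have hProj : IsProj (⨅ i, ker (φ i)) P := hS ▸ ⟨hPmem, hPid⟩
  have hZ : Z = (span ℝ (Set.range φ)).map Pi := by
    rw [hZsub, Submodule.map_span, ← Set.range_comp]
    exact congrArg (span ℝ ∘ Set.range) (funext hX)
  have hker : ker P = (span ℝ (Set.range φ)).map Pi := by
    rw [← hZ]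
    refine ((le_iff_eq_of_codisjoint_of_disjoint ?_ hProj.isCompl.disjoint).1 hPZ).symm
    exact hZ ▸ (codisjoint_iInf_ker_map_span_of_isUnit Pi φ hGram).symm
  have hPiD' : PiD = P ∘ₗ Pi ∘ₗ P.dualMap := LinearMap.ext hPiD
  exact ⟨hPiD' ▸ ker_comp_comp_dualMap hProj hker,
    disjoint_iff.1 (disjoint_ker_span_of_isUnit Pi φ hGram)⟩

/-- In the Dirac case, ker Π_D = ker Π + span{φ_1,…,φ_k},
and this sum of subspaces of V* is direct. -/
theorem stmt_7
    (V : Type*) [AddCommGroup V] [Module ℝ V] [FiniteDimensional ℝ V]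
    (k : ℕ)
    (Pi : Module.Dual ℝ V →ₗ[ℝ] V)
    (hskew : ∀ α β : Module.Dual ℝ V, α (Pi β) = - β (Pi α))
    (φ : Fin k → Module.Dual ℝ V)
    (M : Matrix (Fin k) (Fin k) ℝ)
    (hM : ∀ i j, M i j = φ i (Pi (φ j)))
    (hMinv : IsUnit M.det)
    (X : Fin k → V) (hX : ∀ i, X i = Pi (φ i))
    (Zv : Fin k → V) (hZ : ∀ i, Zv i = ∑ j, (M⁻¹ j i) • X j)
    (S Z : Submodule ℝ V)
    (hS : S = ⨅ i, LinearMap.ker (φ i))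
    (hZsub : Z = Submodule.span ℝ (Set.range X))
    (P : V →ₗ[ℝ] V)
    (hPmem : ∀ v : V, P v ∈ S)
    (hPid : ∀ v ∈ S, P v = v)
    (hPZ : ∀ v ∈ Z, P v = 0)
    (PiD : Module.Dual ℝ V →ₗ[ℝ] V)
    (hPiD : ∀ α : Module.Dual ℝ V, PiD α = P (Pi (α.comp P))) :
    LinearMap.ker PiD = LinearMap.ker Pi ⊔ Submodule.span ℝ (Set.range φ) ∧
    LinearMap.ker Pi ⊓ Submodule.span ℝ (Set.range φ) = ⊥ :=
  stmt_7_general V k Pi φ M hM hMinv X hX S Z hS hZsub P hPmem hPid hPZ PiD hPiD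
end

section
/- The image of Π_d is contained in S if and only if the vectors V_1, …, V_k satisfy the functional equation V_i = X_i + Σ_{j=1}^k φ_i(V_j) Z_j for every i = 1, …, k. -/
/-!
`S` is the common kernel of the `φ i`. As `Π_d` is skew, `φ i (Π_d α) = -α (Π_d φ i)`, so
`Π_d` maps into `S` iff `Π_d φ i = 0` for every `i`, and
`Π_d φ i = X i - V i + ∑ j, φ i (V j) • Z j`.
-/

open Module

section Bivector

variable {R M ι : Type*} [CommRing R] [AddCommGroup M] [Module R M]

theorem skew_sub_sum_wedge [Fintype ι] {B Bd : Dual R M →ₗ[R] M}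
    (hskew : ∀ α β : Dual R M, α (B β) = -β (B α)) (Z W : ι → M)
    (hBd : ∀ α : Dual R M, Bd α = B α - ∑ i, (α (Z i) • W i - α (W i) • Z i))
    (α β : Dual R M) : α (Bd β) = -β (Bd α) := by
  simp only [hBd, map_sub, map_sum, map_smul, smul_eq_mul, hskew α β, Finset.sum_sub_distrib,
    mul_comm (β _)]
  ring

theorem mem_iff_forall_dual_apply_eq_zero [Fintype ι] [DecidableEq ι] {S : Submodule R M}
    {Z : ι → M}
    (hspan : S ⊔ Submodule.span R (Set.range Z) = ⊤) {φ : ι → Dual R M}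
    (hφS : ∀ i, ∀ v ∈ S, φ i v = 0) (hφZ : ∀ i j, φ i (Z j) = if i = j then 1 else 0)
    (v : M) : v ∈ S ↔ ∀ i, φ i v = 0 := by
  refine ⟨fun hv i => hφS i v hv, fun hv => ?_⟩
  obtain ⟨s, hs, z, hz, rfl⟩ := Submodule.mem_sup.mp (hspan ▸ Submodule.mem_top (x := v))
  obtain ⟨c, rfl⟩ := (Submodule.mem_span_range_iff_exists_fun R).mp hz
  have hc : ∀ i, c i = 0 := fun i => by
    simpa [hφS i s hs, hφZ, Finset.sum_ite_eq] using hv i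
  simpa [hc] using hs

theorem forall_dual_apply_eq_zero_iff_of_skew [Projective R M] {D : Dual R M →ₗ[R] M}
    (hskew : ∀ α β : Dual R M, α (D β) = -β (D α)) (φ : ι → Dual R M) :
    (∀ α, ∀ i, φ i (D α) = 0) ↔ ∀ i, D (φ i) = 0 := by
  simp_rw [← forall_dual_apply_eq_zero_iff R (D _), hskew (φ _), neg_eq_zero]
  exact forall_comm

theorem sub_sum_wedge_apply_dual [Fintype ι] [DecidableEq ι] {B Bd : Dual R M →ₗ[R] M}
    {Z W : ι → M}
    (hBd : ∀ α : Dual R M, Bd α = B α - ∑ i, (α (Z i) • W i - α (W i) • Z i))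
    {φ : ι → Dual R M} (hφZ : ∀ i j, φ i (Z j) = if i = j then 1 else 0) (i : ι) :
    Bd (φ i) = B (φ i) - W i + ∑ j, φ i (W j) • Z j := by
  simp only [hBd, Finset.sum_sub_distrib, hφZ, ite_smul, one_smul, zero_smul, Finset.sum_ite_eq,
    Finset.mem_univ, if_true]
  abel

end Bivector

theorem stmt_11_general
    (V : Type*) [AddCommGroup V] [Module ℝ V]
    (k : ℕ)
    (Pi : Module.Dual ℝ V →ₗ[ℝ] V)
    (hskew : ∀ α β : Module.Dual ℝ V, α (Pi β) = - β (Pi α))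
    (S Z : Submodule ℝ V) (hcompl : IsCompl S Z)
    (Zv : Fin k → V)
    (hZspan : Submodule.span ℝ (Set.range Zv) = Z)
    (φ : Fin k → Module.Dual ℝ V)
    (hφS : ∀ i, ∀ v ∈ S, φ i v = 0)
    (hφZ : ∀ i j, φ i (Zv j) = if i = j then (1 : ℝ) else 0)
    (X : Fin k → V) (hX : ∀ i, X i = Pi (φ i))
    (Vv : Fin k → V)
    (Pid : Module.Dual ℝ V →ₗ[ℝ] V)
    (hPidDef : ∀ α : Module.Dual ℝ V,
      Pid α = Pi α - ∑ i, (α (Zv i) • Vv i - α (Vv i) • Zv i)) :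
    (∀ α : Module.Dual ℝ V, Pid α ∈ S) ↔
      (∀ i, Vv i = X i + ∑ j, (φ i (Vv j)) • Zv j) := by
  have hmem := mem_iff_forall_dual_apply_eq_zero (hZspan ▸ hcompl.sup_eq_top) hφS hφZ
  calc (∀ α, Pid α ∈ S) ↔ ∀ α, ∀ i, φ i (Pid α) = 0 := forall_congr' fun α => hmem _
    _ ↔ ∀ i, Pid (φ i) = 0 :=
      forall_dual_apply_eq_zero_iff_of_skew (skew_sub_sum_wedge hskew Zv Vv hPidDef) φ
    _ ↔ ∀ i, Vv i = X i + ∑ j, φ i (Vv j) • Zv j := forall_congr' fun i => by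
      rw [sub_sum_wedge_apply_dual hPidDef hφZ, hX, sub_add_eq_add_sub, sub_eq_zero, eq_comm]

/-- The image of Π_d = Π − Σ_i V_i ∧ Z_i is contained in S iff the
vectors V_1,…,V_k satisfy the functional equation V_i = X_i + Σ_j φ_i(V_j) Z_j. -/
theorem stmt_11
    (V : Type*) [AddCommGroup V] [Module ℝ V] [FiniteDimensional ℝ V]
    (k : ℕ)
    (Pi : Module.Dual ℝ V →ₗ[ℝ] V)
    (hskew : ∀ α β : Module.Dual ℝ V, α (Pi β) = - β (Pi α))
    (S Z : Submodule ℝ V) (hcompl : IsCompl S Z)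
    (P : V →ₗ[ℝ] V)
    (hPmem : ∀ v : V, P v ∈ S)
    (hPid : ∀ v ∈ S, P v = v)
    (hPZ : ∀ v ∈ Z, P v = 0)
    (Zv : Fin k → V)
    (hZind : LinearIndependent ℝ Zv)
    (hZspan : Submodule.span ℝ (Set.range Zv) = Z)
    (φ : Fin k → Module.Dual ℝ V)
    (hφS : ∀ i, ∀ v ∈ S, φ i v = 0)
    (hφZ : ∀ i j, φ i (Zv j) = if i = j then (1 : ℝ) else 0)
    (X : Fin k → V) (hX : ∀ i, X i = Pi (φ i))
    (Vv : Fin k → V)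
    (Pid : Module.Dual ℝ V →ₗ[ℝ] V)
    (hPidDef : ∀ α : Module.Dual ℝ V,
      Pid α = Pi α - ∑ i, (α (Zv i) • Vv i - α (Vv i) • Zv i)) :
    (∀ α : Module.Dual ℝ V, Pid α ∈ S) ↔
      (∀ i, Vv i = X i + ∑ j, (φ i (Vv j)) • Zv j) :=
  stmt_11_general V k Pi hskew S Z hcompl Zv hZspan φ hφS hφZ X hX Vv Pid hPidDef
end

section
/- If the vectors V_1, …, V_k satisfy the functional equation V_i = X_i + Σ_{j=1}^k φ_i(V_j) Z_j for every i, then Π_d coincides with the canonical deformation: Π_d(α,β) = Π(α_∥, β_∥) for all covectors α, β ∈ V*. -/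
/-- If V_i = X_i + Σ_j φ_i(V_j) Z_j for every i, then Π_d coincides
with the canonical deformation: Π_d(α,β) = Π(α_∥, β_∥) for all covectors α, β. -/
theorem stmt_12
    (V : Type*) [AddCommGroup V] [Module ℝ V] [FiniteDimensional ℝ V]
    (k : ℕ)
    (Pi : Module.Dual ℝ V →ₗ[ℝ] V)
    (hskew : ∀ α β : Module.Dual ℝ V, α (Pi β) = - β (Pi α))
    (S Z : Submodule ℝ V) (hcompl : IsCompl S Z)
    (P : V →ₗ[ℝ] V)
    (hPmem : ∀ v : V, P v ∈ S)
    (hPid : ∀ v ∈ S, P v = v)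
    (hPZ : ∀ v ∈ Z, P v = 0)
    (Zv : Fin k → V)
    (hZind : LinearIndependent ℝ Zv)
    (hZspan : Submodule.span ℝ (Set.range Zv) = Z)
    (φ : Fin k → Module.Dual ℝ V)
    (hφS : ∀ i, ∀ v ∈ S, φ i v = 0)
    (hφZ : ∀ i j, φ i (Zv j) = if i = j then (1 : ℝ) else 0)
    (X : Fin k → V) (hX : ∀ i, X i = Pi (φ i))
    (Vv : Fin k → V)
    (Pid : Module.Dual ℝ V →ₗ[ℝ] V)
    (hPidDef : ∀ α : Module.Dual ℝ V,
      Pid α = Pi α - ∑ i, (α (Zv i) • Vv i - α (Vv i) • Zv i))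
    (hfunc : ∀ i, Vv i = X i + ∑ j, (φ i (Vv j)) • Zv j) :
    ∀ α β : Module.Dual ℝ V, α (Pid β) = (α.comp P) (Pi (β.comp P)) := by
  intro α β
  have hZmem : ∀ j, Zv j ∈ Z := by
    intro j; rw [← hZspan]; exact Submodule.subset_span ⟨j, rfl⟩
  have hPZv : ∀ j, P (Zv j) = 0 := fun j => hPZ _ (hZmem j)
  -- key decomposition lemma
  have key : ∀ (γ : Module.Dual ℝ V) (v : V),
      γ v = γ (P v) + ∑ i, φ i v * γ (Zv i) := by
    intro γ v
    have hvmem : v ∈ S ⊔ Z := by rw [hcompl.sup_eq_top]; exact Submodule.mem_top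
    obtain ⟨s, hs, z, hz, hv⟩ := Submodule.mem_sup.mp hvmem
    have hz' : z ∈ Submodule.span ℝ (Set.range Zv) := by rw [hZspan]; exact hz
    obtain ⟨d, hd⟩ := Submodule.mem_span_range_iff_exists_fun ℝ |>.mp hz'
    have hPv : P v = s := by
      rw [← hv, map_add, hPid s hs, hPZ z hz, add_zero]
    have hφv : ∀ j, φ j v = d j := by
      intro j
      rw [← hv, map_add, hφS j s hs, zero_add, ← hd, map_sum]
      simp [hφZ, Finset.sum_ite_eq']
    calc γ v = γ s + γ z := by rw [← hv, map_add]
      _ = γ (P v) + ∑ i, d i * γ (Zv i) := by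
          rw [hPv, ← hd, map_sum]; simp [smul_eq_mul]
      _ = γ (P v) + ∑ i, φ i v * γ (Zv i) := by
          congr 1; exact Finset.sum_congr rfl fun i _ => by rw [hφv i]
  set a : Fin k → ℝ := fun i => α (Zv i) with ha
  set b : Fin k → ℝ := fun i => β (Zv i) with hb
  set c : Fin k → Fin k → ℝ := fun i j => φ i (Vv j) with hc
  -- c i j = φ i (X j) + c j i
  have hcAc : ∀ i j, φ i (X j) = c i j - c j i := by
    intro i j
    have h := congrArg (φ i) (hfunc j)
    rw [map_add, map_sum] at h
    simp only [map_smul, smul_eq_mul, hφZ, mul_ite, mul_one, mul_zero,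
      Finset.sum_ite_eq, Finset.mem_univ, if_true] at h
    simp only [hc]
    linarith
  -- P (Vv i) = P (X i)
  have hPV : ∀ i, P (Vv i) = P (X i) := by
    intro i
    rw [hfunc i, map_add, map_sum]
    simp [hPZv]
  -- α (Vv i) and β (Vv i)
  have hαV : ∀ i, α (Vv i) = α (P (X i)) + ∑ j, c j i * a j := by
    intro i; rw [key α (Vv i), hPV i]
  have hβV : ∀ i, β (Vv i) = β (P (X i)) + ∑ j, c j i * b j := by
    intro i; rw [key β (Vv i), hPV i]
  -- α (X i)
  have hαX : ∀ i, α (X i) = α (P (X i)) + ∑ j, (c j i - c i j) * a j := by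
    intro i
    rw [key α (X i)]
    congr 1
    exact Finset.sum_congr rfl fun j _ => by rw [hcAc j i]
  -- Pi β expansion: β = β.comp P + ∑ b i • φ i as functionals
  have hβdec : β = β.comp P + ∑ i, b i • φ i := by
    ext v
    rw [key β v]
    simp [mul_comm]
    rfl
  have hPiβ : α (Pi β) = α (Pi (β.comp P)) + ∑ i, b i * α (X i) := by
    conv_lhs => rw [hβdec]
    rw [map_add, map_sum, map_add, map_sum]
    congr 1
    refine Finset.sum_congr rfl fun i _ => ?_
    rw [map_smul, map_smul, smul_eq_mul, hX i]
  -- expand α (Pi (β.comp P))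
  have hT : α (Pi (β.comp P)) = (α.comp P) (Pi (β.comp P)) - ∑ i, a i * β (P (X i)) := by
    rw [key α (Pi (β.comp P))]
    have : ∀ i, φ i (Pi (β.comp P)) = - β (P (X i)) := by
      intro i
      rw [hskew (φ i) (β.comp P), hX i]
      rfl
    simp only [this, LinearMap.comp_apply]
    rw [sub_eq_add_neg, ← Finset.sum_neg_distrib]
    congr 1
    exact Finset.sum_congr rfl fun i _ => by ring
  -- the main computation
  have hgoal : α (Pid β) = α (Pi β) - ∑ i, (b i * α (Vv i) - β (Vv i) * a i) := by
    rw [hPidDef β, map_sub, map_sum]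
    simp [smul_eq_mul]
    rfl
  have e1 : ∀ i : Fin k, b i * (α (P (X i)) + ∑ j, c j i * a j)
      - (β (P (X i)) + ∑ j, c j i * b j) * a i
      = (b i * α (P (X i)) - a i * β (P (X i)))
        + ((∑ j, b i * (c j i * a j)) - ∑ j, a i * (c j i * b j)) := by
    intro i
    rw [← Finset.mul_sum, ← Finset.mul_sum]
    ring
  have e2 : ∀ i : Fin k, b i * (α (P (X i)) + ∑ j, (c j i - c i j) * a j)
      = b i * α (P (X i)) + ((∑ j, b i * (c j i * a j)) - ∑ j, b i * (c i j * a j)) := by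
    intro i
    have h : (∑ j, b i * (c j i * a j)) - ∑ j, b i * (c i j * a j)
        = b i * ∑ j, (c j i - c i j) * a j := by
      rw [Finset.mul_sum, ← Finset.sum_sub_distrib]
      exact Finset.sum_congr rfl fun j _ => by ring
    rw [h]
    ring
  rw [hgoal, hPiβ, hT]
  simp only [hαV, hβV, hαX]
  rw [Finset.sum_congr rfl fun i _ => e1 i, Finset.sum_congr rfl fun i _ => e2 i]
  rw [Finset.sum_add_distrib, Finset.sum_add_distrib, Finset.sum_sub_distrib,
    Finset.sum_sub_distrib, Finset.sum_sub_distrib]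
  have hswap : ∑ i, ∑ j, a i * (c j i * b j) = ∑ i, ∑ j, b i * (c i j * a j) := by
    rw [Finset.sum_comm]
    exact Finset.sum_congr rfl fun i _ => Finset.sum_congr rfl fun j _ => by ring
  rw [hswap]
  ring
end

section
/- Let (q,p) ∈ ℝ²ⁿ be a point of the constraint set, i.e. φ(q) = 0 and ∇φ(q)ᵀG(q)p = 0, and assume ∇φ(q)ᵀG(q)∇φ(q) ≠ 0. Then the Dirac-bracket Hamilton equations coincide with the constrained equations with reaction force: {q_a, H}_D = {q_a, H} for all a = 1,…,n, and {p_a, H}_D = {p_a, H} + R_a for all a, where R = [ (∇φᵀG∇V − pᵀG H_φ G p + A) / (∇φᵀG∇φ) ] · ∇φ, everything evaluated at (q,p). -/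
open Finset Matrix

/-- Partial derivative ∂_a f at q, for f : ℝⁿ → ℝ. -/
noncomputable def pd (n : ℕ) (a : Fin n) (f : (Fin n → ℝ) → ℝ) (q : Fin n → ℝ) : ℝ :=
  fderiv ℝ f q (Pi.single a 1)

/-- Partial derivative ∂F/∂q_a of a phase-space function F(q,p). -/
noncomputable def pdq (n : ℕ) (a : Fin n) (F : (Fin n → ℝ) → (Fin n → ℝ) → ℝ)
    (q p : Fin n → ℝ) : ℝ :=
  fderiv ℝ (fun q' => F q' p) q (Pi.single a 1)

/-- Partial derivative ∂F/∂p_a of a phase-space function F(q,p). -/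
noncomputable def pdp (n : ℕ) (a : Fin n) (F : (Fin n → ℝ) → (Fin n → ℝ) → ℝ)
    (q p : Fin n → ℝ) : ℝ :=
  fderiv ℝ (fun p' => F q p') p (Pi.single a 1)

/-- Canonical Poisson bracket on ℝ²ⁿ:
{F,G} = Σ_a (∂F/∂q_a ∂G/∂p_a − ∂F/∂p_a ∂G/∂q_a). -/
noncomputable def pbr (n : ℕ) (F G : (Fin n → ℝ) → (Fin n → ℝ) → ℝ)
    (q p : Fin n → ℝ) : ℝ :=
  ∑ a, (pdq n a F q p * pdp n a G q p - pdp n a F q p * pdq n a G q p)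

section AuxLemmas
variable {n : ℕ}

lemma contDiff_det' (g : (Fin n → ℝ) → Matrix (Fin n) (Fin n) ℝ)
    (hg : ∀ a b, ContDiff ℝ (⊤ : ℕ∞) fun q => g q a b) :
    ContDiff ℝ (⊤ : ℕ∞) fun q => (g q).det := by
  have h : (fun q => (g q).det)
      = fun q => ∑ σ : Equiv.Perm (Fin n), ((Equiv.Perm.sign σ : ℤ) : ℝ) * ∏ i, g q (σ i) i := by
    funext q
    rw [Matrix.det_apply]
    simp [Units.smul_def, zsmul_eq_mul]
  rw [h]
  exact ContDiff.sum fun σ _ => contDiff_const.mul (contDiff_prod fun i _ => hg _ _)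

lemma contDiff_inv_entry (g : (Fin n → ℝ) → Matrix (Fin n) (Fin n) ℝ)
    (hg : ∀ a b, ContDiff ℝ (⊤ : ℕ∞) fun q => g q a b)
    (hg_inv : ∀ q, IsUnit (g q).det) (a b : Fin n) :
    ContDiff ℝ (⊤ : ℕ∞) fun q => (g q)⁻¹ a b := by
  have hadj : ContDiff ℝ (⊤ : ℕ∞) fun q => (g q).adjugate a b := by
    have h : (fun q => (g q).adjugate a b)
        = fun q => ((g q).updateRow b (Pi.single a 1)).det := by
      funext q; rw [Matrix.adjugate_apply]
    rw [h]
    apply contDiff_det'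
    intro i j
    by_cases hib : i = b
    · subst hib
      simpa [Matrix.updateRow_apply] using
        (contDiff_const : ContDiff ℝ (⊤ : ℕ∞) fun _ : Fin n → ℝ => (Pi.single a 1 : Fin n → ℝ) j)
    · simpa [Matrix.updateRow_apply, hib] using hg i j
  have hdet := contDiff_det' g hg
  have hdne : ∀ q, (g q).det ≠ 0 := fun q => (hg_inv q).ne_zero
  have h : (fun q => (g q)⁻¹ a b) = fun q => ((g q).det)⁻¹ * (g q).adjugate a b := by
    funext q
    rw [Matrix.inv_def, Matrix.smul_apply, Ring.inverse_eq_inv', smul_eq_mul]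
  rw [h]
  exact (hdet.inv hdne).mul hadj

lemma inv_entry_symm (M : Matrix (Fin n) (Fin n) ℝ) (hsymm : ∀ a b, M a b = M b a)
    (a b : Fin n) : M⁻¹ a b = M⁻¹ b a := by
  have hT : Mᵀ = M := by ext i j; simp [Matrix.transpose_apply, hsymm i j]
  calc M⁻¹ a b = (M⁻¹)ᵀ b a := rfl
    _ = (Mᵀ)⁻¹ b a := by rw [Matrix.transpose_nonsing_inv]
    _ = M⁻¹ b a := by rw [hT]

lemma diff_eval (a : Fin n) (x : Fin n → ℝ) :
    DifferentiableAt ℝ (fun y : Fin n → ℝ => y a) x := by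
  have h : (fun y : Fin n → ℝ => y a)
      = ⇑(ContinuousLinearMap.proj (R := ℝ) (φ := fun _ : Fin n => ℝ) a) := rfl
  rw [h]
  exact (ContinuousLinearMap.proj (R := ℝ) (φ := fun _ : Fin n => ℝ) a).differentiableAt

lemma fderiv_eval (a : Fin n) (x v : Fin n → ℝ) :
    fderiv ℝ (fun y : Fin n → ℝ => y a) x v = v a := by
  have h : (fun y : Fin n → ℝ => y a)
      = ⇑(ContinuousLinearMap.proj (R := ℝ) (φ := fun _ : Fin n => ℝ) a) := rfl
  rw [h, ContinuousLinearMap.fderiv]; rfl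

lemma fderiv_sum_apply' {x v : Fin n → ℝ} {ι : Type*} (s : Finset ι)
    (F : ι → (Fin n → ℝ) → ℝ) (hF : ∀ i ∈ s, DifferentiableAt ℝ (F i) x) :
    fderiv ℝ (fun y => ∑ i ∈ s, F i y) x v = ∑ i ∈ s, fderiv ℝ (F i) x v := by
  rw [fderiv_fun_sum hF]; simp

lemma fderiv_mul3 {x v : Fin n → ℝ} {f g h : (Fin n → ℝ) → ℝ} (hf : DifferentiableAt ℝ f x)
    (hg : DifferentiableAt ℝ g x) (hh : DifferentiableAt ℝ h x) :
    fderiv ℝ (fun y => f y * g y * h y) x v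
      = fderiv ℝ f x v * g x * h x + f x * fderiv ℝ g x v * h x
        + f x * g x * fderiv ℝ h x v := by
  rw [fderiv_fun_mul (hf.fun_mul hg) hh, fderiv_fun_mul hf hg]
  simp; ring

lemma fderiv_linform (k : Fin n → Fin n → ℝ) (p v : Fin n → ℝ) :
    fderiv ℝ (fun p' : Fin n → ℝ => ∑ a, ∑ b, k a b * p' b) p v
      = ∑ a, ∑ b, k a b * v b := by
  rw [fderiv_sum_apply' univ _ (fun a _ => by
    exact DifferentiableAt.fun_sum fun b _ => (diff_eval b p).const_mul (k a b))]
  refine Finset.sum_congr rfl fun a _ => ?_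
  rw [fderiv_sum_apply' univ _ (fun b _ => (diff_eval b p).const_mul (k a b))]
  refine Finset.sum_congr rfl fun b _ => ?_
  rw [fderiv_const_mul (diff_eval b p) (k a b)]
  simp [fderiv_eval]

lemma fderiv_quadform (M : Fin n → Fin n → ℝ) (p v : Fin n → ℝ) :
    fderiv ℝ (fun p' : Fin n → ℝ => ∑ a, ∑ b, p' a * M a b * p' b) p v
      = ∑ a, ∑ b, (v a * M a b * p b + p a * M a b * v b) := by
  rw [fderiv_sum_apply' univ _ (fun a _ => by
    exact DifferentiableAt.fun_sum fun b _ =>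
      ((diff_eval a p).fun_mul (differentiableAt_const (M a b))).fun_mul (diff_eval b p))]
  refine Finset.sum_congr rfl fun a _ => ?_
  rw [fderiv_sum_apply' univ _ (fun b _ =>
    ((diff_eval a p).fun_mul (differentiableAt_const (M a b))).fun_mul (diff_eval b p))]
  refine Finset.sum_congr rfl fun b _ => ?_
  rw [fderiv_mul3 (diff_eval a p) (differentiableAt_const (M a b)) (diff_eval b p)]
  simp [fderiv_eval]

lemma fderiv_sum2_mul3 {x v : Fin n → ℝ} (F G K : Fin n → Fin n → (Fin n → ℝ) → ℝ)
    (hF : ∀ a b, DifferentiableAt ℝ (F a b) x) (hG : ∀ a b, DifferentiableAt ℝ (G a b) x)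
    (hK : ∀ a b, DifferentiableAt ℝ (K a b) x) :
    fderiv ℝ (fun y => ∑ a, ∑ b, F a b y * G a b y * K a b y) x v
      = ∑ a, ∑ b, (fderiv ℝ (F a b) x v * G a b x * K a b x
          + F a b x * fderiv ℝ (G a b) x v * K a b x
          + F a b x * G a b x * fderiv ℝ (K a b) x v) := by
  rw [fderiv_sum_apply' univ _ (fun a _ => by
    exact DifferentiableAt.fun_sum fun b _ => ((hF a b).fun_mul (hG a b)).fun_mul (hK a b))]
  refine Finset.sum_congr rfl fun a _ => ?_
  rw [fderiv_sum_apply' univ _ (fun b _ => ((hF a b).fun_mul (hG a b)).fun_mul (hK a b))]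
  exact Finset.sum_congr rfl fun b _ => fderiv_mul3 (hF a b) (hG a b) (hK a b)

lemma sum_swap4 (f : Fin n → Fin n → Fin n → Fin n → ℝ) :
    ∑ a, ∑ b, ∑ k, ∑ l, f a b k l = ∑ k, ∑ l, ∑ a, ∑ b, f a b k l := by
  calc ∑ a, ∑ b, ∑ k, ∑ l, f a b k l
      = ∑ a, ∑ k, ∑ b, ∑ l, f a b k l := Finset.sum_congr rfl fun a _ => Finset.sum_comm
    _ = ∑ k, ∑ a, ∑ b, ∑ l, f a b k l := Finset.sum_comm
    _ = ∑ k, ∑ a, ∑ l, ∑ b, f a b k l :=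
        Finset.sum_congr rfl fun k _ => Finset.sum_congr rfl fun a _ => Finset.sum_comm
    _ = ∑ k, ∑ l, ∑ a, ∑ b, f a b k l := Finset.sum_congr rfl fun k _ => Finset.sum_comm

lemma collapse_ab {ι κ : Type*} (s : Finset ι) (t : Finset κ) (α : ι → ℝ) (β : κ → ℝ)
    (d : ℝ) : ∑ a ∈ s, ∑ b ∈ t, α a * d * β b = (∑ a ∈ s, α a) * d * (∑ b ∈ t, β b) := by
  rw [Finset.sum_mul, Finset.sum_mul]
  refine Finset.sum_congr rfl fun a _ => ?_
  rw [Finset.mul_sum]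

lemma sum_rot4 (f : Fin n → Fin n → Fin n → Fin n → ℝ) :
    ∑ s, ∑ i, ∑ j, ∑ l, f s i j l = ∑ i, ∑ j, ∑ l, ∑ s, f s i j l := by
  calc ∑ s, ∑ i, ∑ j, ∑ l, f s i j l
      = ∑ i, ∑ s, ∑ j, ∑ l, f s i j l := Finset.sum_comm
    _ = ∑ i, ∑ j, ∑ s, ∑ l, f s i j l := Finset.sum_congr rfl fun i _ => Finset.sum_comm
    _ = ∑ i, ∑ j, ∑ l, ∑ s, f s i j l :=
        Finset.sum_congr rfl fun i _ => Finset.sum_congr rfl fun j _ => Finset.sum_comm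

lemma sum_rot3 (f : Fin n → Fin n → Fin n → ℝ) :
    ∑ i, ∑ j, ∑ l, f i j l = ∑ l, ∑ i, ∑ j, f i j l := by
  calc ∑ i, ∑ j, ∑ l, f i j l
      = ∑ i, ∑ l, ∑ j, f i j l := Finset.sum_congr rfl fun i _ => Finset.sum_comm
    _ = ∑ l, ∑ i, ∑ j, f i j l := Finset.sum_comm

lemma const_mul_sum3 (r : ℝ) (f : Fin n → Fin n → Fin n → ℝ) :
    r * (∑ i, ∑ j, ∑ l, f i j l) = ∑ i, ∑ j, ∑ l, r * f i j l := by
  rw [Finset.mul_sum]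
  refine Finset.sum_congr rfl fun i _ => ?_
  rw [Finset.mul_sum]
  exact Finset.sum_congr rfl fun j _ => by rw [Finset.mul_sum]

lemma contDiff_pd (φ : (Fin n → ℝ) → ℝ) (hφ : ContDiff ℝ (⊤ : ℕ∞) φ) (a : Fin n) :
    ContDiff ℝ (⊤ : ℕ∞) fun y => pd n a φ y := by
  unfold pd
  have h := (hφ.fderiv_right (m := (⊤ : ℕ∞)) (by simp))
  exact (ContinuousLinearMap.apply ℝ ℝ (Pi.single a 1 : Fin n → ℝ)).contDiff.comp h

lemma pd_inv_entry (g : (Fin n → ℝ) → Matrix (Fin n) (Fin n) ℝ)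
    (hg : ∀ a b, ContDiff ℝ (⊤ : ℕ∞) fun q => g q a b)
    (hg_inv : ∀ q, IsUnit (g q).det) (a b c : Fin n) (q : Fin n → ℝ)
    (hGd : ∀ k l, DifferentiableAt ℝ (fun y => (g y)⁻¹ k l) q) :
    pd n c (fun y => (g y)⁻¹ a b) q
      = - ∑ k, ∑ l, (g q)⁻¹ a k * pd n c (fun y => g y k l) q * (g q)⁻¹ l b := by
  have hgd : ∀ k l, DifferentiableAt ℝ (fun y => g y k l) q :=
    fun k l => ((hg k l).differentiable (by simp)).differentiableAt
  have hstar : ∀ b' : Fin n,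
      ∑ k, (pd n c (fun y => (g y)⁻¹ a k) q * g q k b'
        + (g q)⁻¹ a k * pd n c (fun y => g y k b') q) = 0 := by
    intro b'
    have hfun : (fun y => ∑ k, (g y)⁻¹ a k * g y k b')
        = fun _ => (1 : Matrix (Fin n) (Fin n) ℝ) a b' := by
      funext y
      rw [← Matrix.mul_apply, Matrix.nonsing_inv_mul _ (hg_inv y)]
    have h0 : fderiv ℝ (fun y => ∑ k, (g y)⁻¹ a k * g y k b') q (Pi.single c 1) = 0 := by
      rw [hfun, fderiv_fun_const]; simp
    rw [fderiv_sum_apply' univ _ (fun k _ => (hGd a k).fun_mul (hgd k b'))] at h0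
    rw [← h0]
    refine Finset.sum_congr rfl fun k _ => ?_
    rw [fderiv_fun_mul (hGd a k) (hgd k b')]
    simp [pd]; ring
  have hdelta : ∀ k, (∑ b', g q k b' * (g q)⁻¹ b' b) = if k = b then 1 else 0 := by
    intro k
    rw [← Matrix.mul_apply, Matrix.mul_nonsing_inv _ (hg_inv q)]
    simp [Matrix.one_apply]
  calc pd n c (fun y => (g y)⁻¹ a b) q
      = ∑ k, pd n c (fun y => (g y)⁻¹ a k) q * (if k = b then 1 else 0) := by
        simp [mul_ite, mul_one, mul_zero, Finset.sum_ite_eq']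
    _ = ∑ k, ∑ b', pd n c (fun y => (g y)⁻¹ a k) q * g q k b' * (g q)⁻¹ b' b := by
        refine Finset.sum_congr rfl fun k _ => ?_
        rw [← hdelta k, Finset.mul_sum]
        exact Finset.sum_congr rfl fun i _ => by ring
    _ = ∑ b', (∑ k, pd n c (fun y => (g y)⁻¹ a k) q * g q k b') * (g q)⁻¹ b' b := by
        rw [Finset.sum_comm]
        exact Finset.sum_congr rfl fun b' _ => by rw [Finset.sum_mul]
    _ = ∑ b', (- ∑ k, (g q)⁻¹ a k * pd n c (fun y => g y k b') q) * (g q)⁻¹ b' b := by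
        refine Finset.sum_congr rfl fun b' _ => ?_
        congr 1
        have := hstar b'
        rw [Finset.sum_add_distrib] at this
        linarith
    _ = ∑ b', ∑ k, -((g q)⁻¹ a k * pd n c (fun y => g y k b') q * (g q)⁻¹ b' b) := by
        refine Finset.sum_congr rfl fun b' _ => ?_
        rw [neg_mul, Finset.sum_mul, ← Finset.sum_neg_distrib]
    _ = ∑ k, ∑ b', -((g q)⁻¹ a k * pd n c (fun y => g y k b') q * (g q)⁻¹ b' b) :=
        Finset.sum_comm
    _ = - ∑ k, ∑ l, (g q)⁻¹ a k * pd n c (fun y => g y k l) q * (g q)⁻¹ l b := by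
        rw [← Finset.sum_neg_distrib]
        exact Finset.sum_congr rfl fun k _ => by rw [← Finset.sum_neg_distrib]

end AuxLemmas

/-- at a point of the constraint set (φ(q) = 0, ∇φᵀGp = 0,
∇φᵀG∇φ ≠ 0) the Dirac-bracket Hamilton equations coincide with the constrained
equations with reaction force R. -/
theorem stmt_16 (n : ℕ)
    (g : (Fin n → ℝ) → Matrix (Fin n) (Fin n) ℝ)
    (hg_smooth : ∀ a b, ContDiff ℝ (⊤ : ℕ∞) fun q => g q a b)
    (hg_symm : ∀ q a b, g q a b = g q b a)
    (hg_inv : ∀ q, IsUnit (g q).det)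
    (Gm : (Fin n → ℝ) → Matrix (Fin n) (Fin n) ℝ)
    (hGm : ∀ q, Gm q = (g q)⁻¹)
    (Vp : (Fin n → ℝ) → ℝ) (hVp : ContDiff ℝ (⊤ : ℕ∞) Vp)
    (φ : (Fin n → ℝ) → ℝ) (hφ : ContDiff ℝ (⊤ : ℕ∞) φ)
    (H : (Fin n → ℝ) → (Fin n → ℝ) → ℝ)
    (hH : ∀ q p, H q p = (1 / 2) * (∑ a, ∑ b, p a * Gm q a b * p b) + Vp q)
    -- the phase-space constraints φ₁(q,p) = φ(q), φ₂(q,p) = ∇φᵀGp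
    (Φ : Fin 2 → (Fin n → ℝ) → (Fin n → ℝ) → ℝ)
    (hΦ1 : ∀ q p, Φ 0 q p = φ q)
    (hΦ2 : ∀ q p, Φ 1 q p = ∑ a, ∑ b, pd n a φ q * Gm q a b * p b)
    -- the matrix C of Poisson brackets of the constraints
    (C : (Fin n → ℝ) → (Fin n → ℝ) → Matrix (Fin 2) (Fin 2) ℝ)
    (hC : ∀ q p i j, C q p i j = pbr n (Φ i) (Φ j) q p)
    -- the Dirac bracket
    (Dbr : ((Fin n → ℝ) → (Fin n → ℝ) → ℝ) → ((Fin n → ℝ) → (Fin n → ℝ) → ℝ) →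
      (Fin n → ℝ) → (Fin n → ℝ) → ℝ)
    (hDbr : ∀ F G q p, Dbr F G q p =
      pbr n F G q p - ∑ i, ∑ j, pbr n F (Φ i) q p * ((C q p)⁻¹ i j) * pbr n (Φ j) G q p)
    -- Christoffel symbols of g
    (Γ : Fin n → Fin n → Fin n → (Fin n → ℝ) → ℝ)
    (hΓ : ∀ s i j q, Γ s i j q = (1 / 2) * ∑ l, Gm q s l *
      (pd n i (fun y => g y l j) q + pd n j (fun y => g y l i) q
        - pd n l (fun y => g y i j) q))
    -- the quantity A(q,p)
    (Af : (Fin n → ℝ) → (Fin n → ℝ) → ℝ)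
    (hAf : ∀ q p, Af q p = ∑ s, pd n s φ q *
      ∑ i, ∑ j, ∑ r, ∑ m, Γ s i j q * Gm q i r * Gm q j m * p r * p m)
    -- a point (q,p) of the constraint set
    (q p : Fin n → ℝ)
    (hconstr1 : φ q = 0)
    (hconstr2 : ∑ a, ∑ b, pd n a φ q * Gm q a b * p b = 0)
    (hden : (∑ a, ∑ b, pd n a φ q * Gm q a b * pd n b φ q) ≠ 0)
    -- the reaction force R at (q,p)
    (R : Fin n → ℝ)
    (hR : ∀ a, R a =
      (((∑ i, ∑ j, pd n i φ q * Gm q i j * pd n j Vp q)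
        - (∑ b, ∑ c, (∑ i, p i * Gm q i b) * pd n b (fun y => pd n c φ y) q
            * (∑ d, Gm q c d * p d))
        + Af q p)
       / (∑ i, ∑ j, pd n i φ q * Gm q i j * pd n j φ q)) * pd n a φ q) :
    (∀ a : Fin n, Dbr (fun q' _ => q' a) H q p = pbr n (fun q' _ => q' a) H q p) ∧
    (∀ a : Fin n, Dbr (fun _ p' => p' a) H q p = pbr n (fun _ p' => p' a) H q p + R a) := by
  classical
  -- basic smoothness/differentiability facts
  have hGsm : ∀ a b, ContDiff ℝ (⊤ : ℕ∞) fun y => Gm y a b := by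
    intro a b
    have h : (fun y => Gm y a b) = fun y => (g y)⁻¹ a b := funext fun y => by rw [hGm]
    rw [h]; exact contDiff_inv_entry g hg_smooth hg_inv a b
  have hGmd : ∀ (x : Fin n → ℝ) a b, DifferentiableAt ℝ (fun y => Gm y a b) x :=
    fun x a b => ((hGsm a b).differentiable (by simp)).differentiableAt
  have hgd : ∀ (x : Fin n → ℝ) a b, DifferentiableAt ℝ (fun y => g y a b) x :=
    fun x a b => ((hg_smooth a b).differentiable (by simp)).differentiableAt
  have hpdφd : ∀ (x : Fin n → ℝ) a, DifferentiableAt ℝ (fun y => pd n a φ y) x :=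
    fun x a => ((contDiff_pd φ hφ a).differentiable (by simp)).differentiableAt
  have hVd : ∀ (x : Fin n → ℝ), DifferentiableAt ℝ Vp x :=
    fun x => (hVp.differentiable (by simp)).differentiableAt
  have hGsymm : ∀ a b, Gm q a b = Gm q b a := by
    intro a b; rw [hGm]; exact inv_entry_symm (g q) (hg_symm q) a b
  -- derivative of the inverse metric
  have hDG : ∀ c a b, pd n c (fun y => Gm y a b) q
      = - ∑ k, ∑ l, Gm q a k * pd n c (fun y => g y k l) q * Gm q l b := by
    intro c a b
    have h1 : (fun y => Gm y a b) = fun y => (g y)⁻¹ a b := funext fun y => by rw [hGm]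
    have h2 : ∀ k l, (fun y => Gm y k l) = fun y => (g y)⁻¹ k l :=
      fun k l => funext fun y => by rw [hGm]
    rw [h1, pd_inv_entry g hg_smooth hg_inv a b c q (fun k l => by rw [← h2 k l]; exact hGmd q k l)]
    rw [← hGm]
  -- ∂Φ₀/∂p = 0, ∂Φ₀/∂q = ∇φ
  have hpdpΦ0 : ∀ b, pdp n b (Φ 0) q p = 0 := by
    intro b
    unfold pdp
    have h : (fun p' => Φ 0 q p') = fun _ => φ q := funext fun p' => hΦ1 q p'
    rw [h, fderiv_fun_const]; simp
  have hpdqΦ0 : ∀ c, pdq n c (Φ 0) q p = pd n c φ q := by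
    intro c
    unfold pdq pd
    have h : (fun q' => Φ 0 q' p) = φ := funext fun q' => hΦ1 q' p
    rw [h]
  -- ∂Φ₁/∂p_b = w b := Σ_s ∂_sφ G_{sb}
  have hpdpΦ1 : ∀ b, pdp n b (Φ 1) q p = ∑ s, pd n s φ q * Gm q s b := by
    intro b
    unfold pdp
    have h : (fun p' => Φ 1 q p')
        = fun p' => ∑ a, ∑ b', (pd n a φ q * Gm q a b') * p' b' := funext fun p' => hΦ2 q p'
    rw [h, fderiv_linform]
    simp [Pi.single_apply, mul_ite, mul_one, mul_zero, Finset.sum_ite_eq']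
  -- ∂H/∂p_b = u b := Σ_j G_{bj} p_j
  have hpdpH : ∀ b, pdp n b H q p = ∑ j, Gm q b j * p j := by
    intro b
    unfold pdp
    have h : (fun p' => H q p')
        = fun p' => (1/2) * (∑ a, ∑ b', p' a * Gm q a b' * p' b') + Vp q :=
      funext fun p' => hH q p'
    rw [h]
    rw [fderiv_fun_add (by
      exact (DifferentiableAt.fun_sum fun a _ => DifferentiableAt.fun_sum fun b' _ =>
        ((diff_eval a p).fun_mul (differentiableAt_const _)).fun_mul (diff_eval b' p)).const_mul _)
      (differentiableAt_const _)]
    rw [ContinuousLinearMap.add_apply]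
    rw [fderiv_fun_const]
    rw [fderiv_const_mul (DifferentiableAt.fun_sum fun a _ => DifferentiableAt.fun_sum fun b' _ =>
        ((diff_eval a p).fun_mul (differentiableAt_const (Gm q a b'))).fun_mul (diff_eval b' p))]
    simp only [ContinuousLinearMap.coe_smul', Pi.smul_apply, ContinuousLinearMap.zero_apply,
      add_zero, smul_eq_mul]
    rw [fderiv_quadform (M := Gm q)]
    simp only [Pi.single_apply, ite_mul, one_mul, zero_mul, mul_ite, mul_one, mul_zero,
      Finset.sum_add_distrib, Finset.sum_ite_eq, Finset.sum_ite_eq', Finset.mem_univ, if_true]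
    have h2 : (∑ x : Fin n, ∑ x1 : Fin n, if x = b then Gm q x x1 * p x1 else 0)
        = ∑ j, Gm q b j * p j := by rw [Finset.sum_comm]; simp [Finset.sum_ite_eq']
    rw [h2]
    simp only [Pi.zero_apply, ContinuousLinearMap.zero_apply]
    have hsym : ∑ x : Fin n, p x * Gm q x b = ∑ x : Fin n, Gm q b x * p x :=
      Finset.sum_congr rfl fun a _ => by rw [hGsymm a b]; ring
    rw [hsym]
    ring
  -- ∂H/∂q_c
  have hpdqH : ∀ c, pdq n c H q p
      = (1/2) * (∑ a, ∑ b, p a * pd n c (fun y => Gm y a b) q * p b) + pd n c Vp q := by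
    intro c
    unfold pdq
    have h : (fun q' => H q' p)
        = fun q' => (1/2) * (∑ a, ∑ b, p a * Gm q' a b * p b) + Vp q' :=
      funext fun q' => hH q' p
    rw [h]
    have hdiffsum : DifferentiableAt ℝ (fun q' => ∑ a, ∑ b, p a * Gm q' a b * p b) q :=
      DifferentiableAt.fun_sum fun a _ => DifferentiableAt.fun_sum fun b _ =>
        ((differentiableAt_const (p a)).fun_mul (hGmd q a b)).fun_mul (differentiableAt_const (p b))
    rw [fderiv_fun_add (hdiffsum.const_mul _) (hVd q), ContinuousLinearMap.add_apply,
      fderiv_const_mul hdiffsum]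
    simp only [ContinuousLinearMap.coe_smul', Pi.smul_apply, smul_eq_mul]
    rw [fderiv_sum2_mul3 (fun a _ => fun _ => p a) (fun a b => fun y => Gm y a b)
      (fun _ b => fun _ => p b) (fun a b => differentiableAt_const _)
      (fun a b => hGmd q a b) (fun a b => differentiableAt_const _)]
    simp only [pd, fderiv_fun_const, Pi.zero_apply, ContinuousLinearMap.zero_apply,
      zero_mul, mul_zero, add_zero, zero_add]
  -- ∂Φ₁/∂q_c
  have hpdqΦ1 : ∀ c, pdq n c (Φ 1) q p
      = ∑ a, ∑ b, (pd n c (fun y => pd n a φ y) q * Gm q a b * p b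
          + pd n a φ q * pd n c (fun y => Gm y a b) q * p b) := by
    intro c
    unfold pdq
    have h : (fun q' => Φ 1 q' p)
        = fun q' => ∑ a, ∑ b, pd n a φ q' * Gm q' a b * p b := funext fun q' => hΦ2 q' p
    rw [h]
    rw [fderiv_sum2_mul3 (fun a _ => fun y => pd n a φ y) (fun a b => fun y => Gm y a b)
      (fun _ b => fun _ => p b) (fun a b => hpdφd q a)
      (fun a b => hGmd q a b) (fun a b => differentiableAt_const _)]
    simp only [pd, fderiv_fun_const, Pi.zero_apply, ContinuousLinearMap.zero_apply,
      mul_zero, add_zero]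
  -- brackets among constraints
  have hbr00 : pbr n (Φ 0) (Φ 0) q p = 0 :=
    Finset.sum_eq_zero fun c _ => by ring
  have hbr11 : pbr n (Φ 1) (Φ 1) q p = 0 :=
    Finset.sum_eq_zero fun c _ => by ring
  have hbr01 : pbr n (Φ 0) (Φ 1) q p = ∑ a, ∑ b, pd n a φ q * Gm q a b * pd n b φ q := by
    unfold pbr
    calc ∑ c, (pdq n c (Φ 0) q p * pdp n c (Φ 1) q p - pdp n c (Φ 0) q p * pdq n c (Φ 1) q p)
        = ∑ c, ∑ s, pd n s φ q * Gm q s c * pd n c φ q := by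
          refine Finset.sum_congr rfl fun c _ => ?_
          rw [hpdqΦ0 c, hpdpΦ1 c, hpdpΦ0 c]
          rw [mul_comm (pd n c φ q), Finset.sum_mul]
          refine ?_
          rw [zero_mul, sub_zero]
      _ = ∑ s, ∑ c, pd n s φ q * Gm q s c * pd n c φ q := Finset.sum_comm
  have hbr10 : pbr n (Φ 1) (Φ 0) q p
      = -∑ a, ∑ b, pd n a φ q * Gm q a b * pd n b φ q := by
    unfold pbr
    calc ∑ c, (pdq n c (Φ 1) q p * pdp n c (Φ 0) q p - pdp n c (Φ 1) q p * pdq n c (Φ 0) q p)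
        = ∑ c, -∑ s, pd n s φ q * Gm q s c * pd n c φ q := by
          refine Finset.sum_congr rfl fun c _ => ?_
          rw [hpdqΦ0 c, hpdpΦ1 c, hpdpΦ0 c]
          rw [mul_zero, zero_sub, Finset.sum_mul]
      _ = -∑ c, ∑ s, pd n s φ q * Gm q s c * pd n c φ q := by rw [Finset.sum_neg_distrib]
      _ = -∑ s, ∑ c, pd n s φ q * Gm q s c * pd n c φ q := congrArg Neg.neg Finset.sum_comm

  -- {Φ₀, H} = 0 on the constraint set
  have hbrΦ0H : pbr n (Φ 0) H q p = 0 := by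
    unfold pbr
    calc ∑ c, (pdq n c (Φ 0) q p * pdp n c H q p - pdp n c (Φ 0) q p * pdq n c H q p)
        = ∑ c, ∑ j, pd n c φ q * Gm q c j * p j := by
          refine Finset.sum_congr rfl fun c _ => ?_
          rw [hpdqΦ0 c, hpdpH c, hpdpΦ0 c, zero_mul, sub_zero, Finset.mul_sum]
          exact Finset.sum_congr rfl fun j _ => by ring
      _ = 0 := hconstr2
  -- the inverse of C
  have hCmat : C q p = !![0, ∑ a, ∑ b, pd n a φ q * Gm q a b * pd n b φ q;
      -∑ a, ∑ b, pd n a φ q * Gm q a b * pd n b φ q, 0] := by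
    ext i j
    fin_cases i <;> fin_cases j <;>
      simp [hC, hbr00, hbr01, hbr10, hbr11]
  have hinvC : (C q p)⁻¹
      = ((∑ a, ∑ b, pd n a φ q * Gm q a b * pd n b φ q)
          * (∑ a, ∑ b, pd n a φ q * Gm q a b * pd n b φ q))⁻¹
        • !![(0:ℝ), -∑ a, ∑ b, pd n a φ q * Gm q a b * pd n b φ q;
            ∑ a, ∑ b, pd n a φ q * Gm q a b * pd n b φ q, 0] := by
    have hdet : (C q p).det = (∑ a, ∑ b, pd n a φ q * Gm q a b * pd n b φ q)
        * (∑ a, ∑ b, pd n a φ q * Gm q a b * pd n b φ q) := by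
      rw [hCmat, Matrix.det_fin_two_of]; ring
    rw [Matrix.inv_def, hdet, Ring.inverse_eq_inv']
    congr 1
    rw [hCmat, Matrix.adjugate_fin_two_of, neg_neg]
  have hCinv00 : (C q p)⁻¹ 0 0 = 0 := by rw [hinvC]; simp
  have hCinv11 : (C q p)⁻¹ 1 1 = 0 := by rw [hinvC]; simp
  have hCinv01 : (C q p)⁻¹ 0 1
      = -(∑ a, ∑ b, pd n a φ q * Gm q a b * pd n b φ q)⁻¹ := by
    rw [hinvC]
    simp only [Matrix.smul_apply, Matrix.cons_val', Matrix.cons_val_zero, Matrix.cons_val_one,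
      Matrix.head_cons, Matrix.empty_val', Matrix.cons_val_fin_one, Matrix.head_fin_const,
      smul_eq_mul]
    field_simp
    simp
  have hCinv10 : (C q p)⁻¹ 1 0
      = (∑ a, ∑ b, pd n a φ q * Gm q a b * pd n b φ q)⁻¹ := by
    rw [hinvC]
    simp only [Matrix.smul_apply, Matrix.cons_val', Matrix.cons_val_zero, Matrix.cons_val_one,
      Matrix.head_cons, Matrix.empty_val', Matrix.cons_val_fin_one, Matrix.head_fin_const,
      smul_eq_mul]
    field_simp
    simp
  -- {q_a, Φ₀} = 0 and {p_a, Φ₀} = −∂_aφ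
  have hbrqΦ0 : ∀ a, pbr n (fun q' _ => q' a) (Φ 0) q p = 0 := by
    intro a
    refine Finset.sum_eq_zero fun c _ => ?_
    have h1 : pdp n c (fun q' _ => q' a) q p = 0 := by
      unfold pdp; rw [fderiv_fun_const]; simp
    rw [h1, hpdpΦ0 c]; ring
  have hbrpΦ0 : ∀ a, pbr n (fun _ p' => p' a) (Φ 0) q p = -pd n a φ q := by
    intro a
    unfold pbr
    have h1 : ∀ c, pdq n c (fun _ p' => p' a) q p = 0 := fun c => by
      unfold pdq; rw [fderiv_fun_const]; simp
    have h2 : ∀ c, pdp n c (fun _ p' => p' a) q p = if a = c then 1 else 0 := fun c => by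
      unfold pdp; rw [fderiv_eval]; simp [Pi.single_apply]
    calc ∑ c, (pdq n c (fun _ p' => p' a) q p * pdp n c (Φ 0) q p
          - pdp n c (fun _ p' => p' a) q p * pdq n c (Φ 0) q p)
        = ∑ c, (if a = c then -pd n c φ q else 0) := by
          refine Finset.sum_congr rfl fun c _ => ?_
          rw [h1 c, h2 c, hpdqΦ0 c, hpdpΦ0 c]
          by_cases hac : a = c <;> simp [hac]
      _ = -pd n a φ q := by simp [Finset.sum_ite_eq]
  -- the key computation: {Φ₁, H} = −N
  have hsplit2 : ∀ (F K : Fin n → Fin n → ℝ),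
      (∑ a, ∑ b, (F a b + K a b)) = (∑ a, ∑ b, F a b) + (∑ a, ∑ b, K a b) := by
    intro F K
    rw [← Finset.sum_add_distrib]
    exact Finset.sum_congr rfl fun a _ => Finset.sum_add_distrib
  have hterm : ∀ c, pdq n c (Φ 1) q p * pdp n c H q p - pdp n c (Φ 1) q p * pdq n c H q p
      = (∑ a, ∑ b, pd n c (fun y => pd n a φ y) q * Gm q a b * p b) * (∑ j, Gm q c j * p j)
        + (∑ a, ∑ b, pd n a φ q * pd n c (fun y => Gm y a b) q * p b) * (∑ j, Gm q c j * p j)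
        - (∑ s, pd n s φ q * Gm q s c)
            * ((1/2) * (∑ a, ∑ b, p a * pd n c (fun y => Gm y a b) q * p b))
        - (∑ s, pd n s φ q * Gm q s c) * pd n c Vp q := by
    intro c
    rw [hpdqΦ1 c, hpdpH c, hpdpΦ1 c, hpdqH c, hsplit2]
    ring
  -- S1 = T2
  have hS1 : (∑ c, (∑ a, ∑ b, pd n c (fun y => pd n a φ y) q * Gm q a b * p b)
        * (∑ j, Gm q c j * p j))
      = ∑ b, ∑ c, (∑ i, p i * Gm q i b) * pd n b (fun y => pd n c φ y) q
          * (∑ d, Gm q c d * p d) := by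
    calc (∑ c, (∑ a, ∑ b, pd n c (fun y => pd n a φ y) q * Gm q a b * p b)
            * (∑ j, Gm q c j * p j))
        = ∑ c, ∑ a, pd n c (fun y => pd n a φ y) q * (∑ r, Gm q a r * p r)
            * (∑ j, Gm q c j * p j) := by
          refine Finset.sum_congr rfl fun c _ => ?_
          rw [Finset.sum_mul]
          refine Finset.sum_congr rfl fun a _ => ?_
          congr 1
          rw [Finset.mul_sum]
          exact Finset.sum_congr rfl fun b _ => by ring
      _ = ∑ b, ∑ c, (∑ i, p i * Gm q i b) * pd n b (fun y => pd n c φ y) q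
          * (∑ d, Gm q c d * p d) := by
          refine Finset.sum_congr rfl fun b _ => Finset.sum_congr rfl fun c _ => ?_
          have hub : (∑ i, p i * Gm q i b) = ∑ r, Gm q b r * p r :=
            Finset.sum_congr rfl fun i _ => by rw [hGsymm i b]; ring
          rw [hub]; ring
  -- S4 = T1
  have hS4 : (∑ c, (∑ s, pd n s φ q * Gm q s c) * pd n c Vp q)
      = ∑ i, ∑ j, pd n i φ q * Gm q i j * pd n j Vp q := by
    calc (∑ c, (∑ s, pd n s φ q * Gm q s c) * pd n c Vp q)
        = ∑ c, ∑ s, pd n s φ q * Gm q s c * pd n c Vp q :=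
          Finset.sum_congr rfl fun c _ => Finset.sum_mul _ _ _
      _ = ∑ s, ∑ c, pd n s φ q * Gm q s c * pd n c Vp q := Finset.sum_comm
  -- inner reduction for S2
  have hinner2 : ∀ c, (∑ a, ∑ b, pd n a φ q * pd n c (fun y => Gm y a b) q * p b)
      = ∑ k, ∑ l, (∑ s, pd n s φ q * Gm q s k) * -pd n c (fun y => g y k l) q
          * (∑ r, Gm q l r * p r) := by
    intro c
    calc (∑ a, ∑ b, pd n a φ q * pd n c (fun y => Gm y a b) q * p b)
        = ∑ a, ∑ b, ∑ k, ∑ l, (Gm q a k * pd n c (fun y => g y k l) q * Gm q l b)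
            * (-(pd n a φ q * p b)) := by
          refine Finset.sum_congr rfl fun a _ => Finset.sum_congr rfl fun b _ => ?_
          rw [hDG c a b]
          calc pd n a φ q * (-∑ k, ∑ l, Gm q a k * pd n c (fun y => g y k l) q * Gm q l b)
                * p b
              = (∑ k, ∑ l, Gm q a k * pd n c (fun y => g y k l) q * Gm q l b)
                  * (-(pd n a φ q * p b)) := by ring
            _ = ∑ k, (∑ l, Gm q a k * pd n c (fun y => g y k l) q * Gm q l b)
                  * (-(pd n a φ q * p b)) := Finset.sum_mul _ _ _
            _ = ∑ k, ∑ l, (Gm q a k * pd n c (fun y => g y k l) q * Gm q l b)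
                  * (-(pd n a φ q * p b)) :=
                Finset.sum_congr rfl fun k _ => Finset.sum_mul _ _ _
      _ = ∑ k, ∑ l, ∑ a, ∑ b, (Gm q a k * pd n c (fun y => g y k l) q * Gm q l b)
            * (-(pd n a φ q * p b)) := sum_swap4 _
      _ = ∑ k, ∑ l, (∑ s, pd n s φ q * Gm q s k) * -pd n c (fun y => g y k l) q
            * (∑ r, Gm q l r * p r) := by
          refine Finset.sum_congr rfl fun k _ => Finset.sum_congr rfl fun l _ => ?_
          calc (∑ a, ∑ b, (Gm q a k * pd n c (fun y => g y k l) q * Gm q l b)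
                  * (-(pd n a φ q * p b)))
              = ∑ a, ∑ b, (pd n a φ q * Gm q a k) * -pd n c (fun y => g y k l) q
                  * (Gm q l b * p b) :=
                Finset.sum_congr rfl fun a _ => Finset.sum_congr rfl fun b _ => by ring
            _ = (∑ a, pd n a φ q * Gm q a k) * -pd n c (fun y => g y k l) q
                  * (∑ b, Gm q l b * p b) := collapse_ab univ univ _ _ _
  have hS2 : (∑ c, (∑ a, ∑ b, pd n a φ q * pd n c (fun y => Gm y a b) q * p b)
        * (∑ j, Gm q c j * p j))
      = -∑ c, ∑ k, ∑ l, (∑ s, pd n s φ q * Gm q s k) * pd n c (fun y => g y k l) q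
          * (∑ r, Gm q l r * p r) * (∑ j, Gm q c j * p j) := by
    rw [← Finset.sum_neg_distrib]
    refine Finset.sum_congr rfl fun c _ => ?_
    rw [hinner2 c, Finset.sum_mul, ← Finset.sum_neg_distrib]
    refine Finset.sum_congr rfl fun k _ => ?_
    rw [Finset.sum_mul, ← Finset.sum_neg_distrib]
    exact Finset.sum_congr rfl fun l _ => by ring
  -- inner reduction for S3
  have hinner3 : ∀ c, (∑ a, ∑ b, p a * pd n c (fun y => Gm y a b) q * p b)
      = ∑ k, ∑ l, (∑ r, Gm q k r * p r) * -pd n c (fun y => g y k l) q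
          * (∑ r, Gm q l r * p r) := by
    intro c
    calc (∑ a, ∑ b, p a * pd n c (fun y => Gm y a b) q * p b)
        = ∑ a, ∑ b, ∑ k, ∑ l, (Gm q a k * pd n c (fun y => g y k l) q * Gm q l b)
            * (-(p a * p b)) := by
          refine Finset.sum_congr rfl fun a _ => Finset.sum_congr rfl fun b _ => ?_
          rw [hDG c a b]
          calc p a * (-∑ k, ∑ l, Gm q a k * pd n c (fun y => g y k l) q * Gm q l b) * p b
              = (∑ k, ∑ l, Gm q a k * pd n c (fun y => g y k l) q * Gm q l b)
                  * (-(p a * p b)) := by ring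
            _ = ∑ k, (∑ l, Gm q a k * pd n c (fun y => g y k l) q * Gm q l b)
                  * (-(p a * p b)) := Finset.sum_mul _ _ _
            _ = ∑ k, ∑ l, (Gm q a k * pd n c (fun y => g y k l) q * Gm q l b)
                  * (-(p a * p b)) := Finset.sum_congr rfl fun k _ => Finset.sum_mul _ _ _
      _ = ∑ k, ∑ l, ∑ a, ∑ b, (Gm q a k * pd n c (fun y => g y k l) q * Gm q l b)
            * (-(p a * p b)) := sum_swap4 _
      _ = ∑ k, ∑ l, (∑ r, Gm q k r * p r) * -pd n c (fun y => g y k l) q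
            * (∑ r, Gm q l r * p r) := by
          refine Finset.sum_congr rfl fun k _ => Finset.sum_congr rfl fun l _ => ?_
          calc (∑ a, ∑ b, (Gm q a k * pd n c (fun y => g y k l) q * Gm q l b)
                  * (-(p a * p b)))
              = ∑ a, ∑ b, (p a * Gm q a k) * -pd n c (fun y => g y k l) q
                  * (Gm q l b * p b) :=
                Finset.sum_congr rfl fun a _ => Finset.sum_congr rfl fun b _ => by ring
            _ = (∑ a, p a * Gm q a k) * -pd n c (fun y => g y k l) q
                  * (∑ b, Gm q l b * p b) := collapse_ab univ univ _ _ _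
            _ = (∑ r, Gm q k r * p r) * -pd n c (fun y => g y k l) q
                  * (∑ r, Gm q l r * p r) := by
                have huk : (∑ a, p a * Gm q a k) = ∑ r, Gm q k r * p r :=
                  Finset.sum_congr rfl fun i _ => by rw [hGsymm i k]; ring
                rw [huk]
  have hmulmulsum2 : ∀ (x y : ℝ) (f : Fin n → Fin n → ℝ),
      x * (y * ∑ k, ∑ l, f k l) = ∑ k, ∑ l, y * (x * f k l) := by
    intro x y f
    simp only [Finset.mul_sum]
    exact Finset.sum_congr rfl fun k _ => Finset.sum_congr rfl fun l _ => by ring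
  have hS3 : (∑ c, (∑ s, pd n s φ q * Gm q s c)
        * ((1/2) * (∑ a, ∑ b, p a * pd n c (fun y => Gm y a b) q * p b)))
      = -((1/2) * ∑ c, ∑ k, ∑ l, (∑ s, pd n s φ q * Gm q s c) * (∑ r, Gm q k r * p r)
          * pd n c (fun y => g y k l) q * (∑ r, Gm q l r * p r)) := by
    rw [const_mul_sum3, ← Finset.sum_neg_distrib]
    refine Finset.sum_congr rfl fun c _ => ?_
    rw [hinner3 c, hmulmulsum2, ← Finset.sum_neg_distrib]
    refine Finset.sum_congr rfl fun k _ => ?_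
    rw [← Finset.sum_neg_distrib]
    exact Finset.sum_congr rfl fun l _ => by ring
  -- Af = EX - (1/2) EZ
  have hAf1 : Af q p = ∑ s, ∑ i, ∑ j, pd n s φ q * Γ s i j q * (∑ r, Gm q i r * p r)
      * (∑ r, Gm q j r * p r) := by
    rw [hAf]
    refine Finset.sum_congr rfl fun s _ => ?_
    rw [Finset.mul_sum]
    refine Finset.sum_congr rfl fun i _ => ?_
    rw [Finset.mul_sum]
    refine Finset.sum_congr rfl fun j _ => ?_
    have hcol : (∑ r, ∑ m, Γ s i j q * Gm q i r * Gm q j m * p r * p m)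
        = (∑ r, Gm q i r * p r) * Γ s i j q * (∑ m, Gm q j m * p m) := by
      rw [← collapse_ab univ univ (fun r => Gm q i r * p r) (fun m => Gm q j m * p m)
        (Γ s i j q)]
      exact Finset.sum_congr rfl fun r _ => Finset.sum_congr rfl fun m _ => by ring
    rw [hcol]; ring
  have hAf2 : Af q p = ∑ s, ∑ i, ∑ j, ∑ l, (1/2) * (pd n s φ q * Gm q s l)
      * ((pd n i (fun y => g y l j) q + pd n j (fun y => g y l i) q
          - pd n l (fun y => g y i j) q)
        * ((∑ r, Gm q i r * p r) * (∑ r, Gm q j r * p r))) := by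
    rw [hAf1]
    refine Finset.sum_congr rfl fun s _ => Finset.sum_congr rfl fun i _ =>
      Finset.sum_congr rfl fun j _ => ?_
    rw [hΓ s i j q]
    calc pd n s φ q * ((1/2) * ∑ l, Gm q s l *
            (pd n i (fun y => g y l j) q + pd n j (fun y => g y l i) q
              - pd n l (fun y => g y i j) q))
          * (∑ r, Gm q i r * p r) * (∑ r, Gm q j r * p r)
        = (∑ l, Gm q s l * (pd n i (fun y => g y l j) q + pd n j (fun y => g y l i) q
            - pd n l (fun y => g y i j) q))
          * ((1/2) * (pd n s φ q * ((∑ r, Gm q i r * p r) * (∑ r, Gm q j r * p r)))) := by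
          ring
      _ = ∑ l, Gm q s l * (pd n i (fun y => g y l j) q + pd n j (fun y => g y l i) q
            - pd n l (fun y => g y i j) q)
          * ((1/2) * (pd n s φ q * ((∑ r, Gm q i r * p r) * (∑ r, Gm q j r * p r)))) :=
          Finset.sum_mul _ _ _
      _ = ∑ l, (1/2) * (pd n s φ q * Gm q s l)
          * ((pd n i (fun y => g y l j) q + pd n j (fun y => g y l i) q
              - pd n l (fun y => g y i j) q)
            * ((∑ r, Gm q i r * p r) * (∑ r, Gm q j r * p r))) :=
          Finset.sum_congr rfl fun l _ => by ring
  have hAf3 : Af q p = ∑ i, ∑ j, ∑ l, (∑ s, pd n s φ q * Gm q s l)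
      * ((1/2) * ((pd n i (fun y => g y l j) q + pd n j (fun y => g y l i) q
          - pd n l (fun y => g y i j) q)
        * ((∑ r, Gm q i r * p r) * (∑ r, Gm q j r * p r)))) := by
    rw [hAf2, sum_rot4]
    refine Finset.sum_congr rfl fun i _ => Finset.sum_congr rfl fun j _ =>
      Finset.sum_congr rfl fun l _ => ?_
    conv_rhs => rw [Finset.sum_mul]
    exact Finset.sum_congr rfl fun s _ => by ring
  have hAfsplit : Af q p
      = (∑ i, ∑ j, ∑ l, (∑ s, pd n s φ q * Gm q s l)
          * ((1/2) * (pd n i (fun y => g y l j) q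
            * ((∑ r, Gm q i r * p r) * (∑ r, Gm q j r * p r)))))
        + (∑ i, ∑ j, ∑ l, (∑ s, pd n s φ q * Gm q s l)
          * ((1/2) * (pd n j (fun y => g y l i) q
            * ((∑ r, Gm q i r * p r) * (∑ r, Gm q j r * p r)))))
        - (∑ i, ∑ j, ∑ l, (∑ s, pd n s φ q * Gm q s l)
          * ((1/2) * (pd n l (fun y => g y i j) q
            * ((∑ r, Gm q i r * p r) * (∑ r, Gm q j r * p r))))) := by
    rw [hAf3]
    calc (∑ i, ∑ j, ∑ l, (∑ s, pd n s φ q * Gm q s l)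
          * ((1/2) * ((pd n i (fun y => g y l j) q + pd n j (fun y => g y l i) q
              - pd n l (fun y => g y i j) q)
            * ((∑ r, Gm q i r * p r) * (∑ r, Gm q j r * p r)))))
        = ∑ i, ∑ j, ∑ l, ((∑ s, pd n s φ q * Gm q s l)
            * ((1/2) * (pd n i (fun y => g y l j) q
              * ((∑ r, Gm q i r * p r) * (∑ r, Gm q j r * p r))))
          + (∑ s, pd n s φ q * Gm q s l)
            * ((1/2) * (pd n j (fun y => g y l i) q
              * ((∑ r, Gm q i r * p r) * (∑ r, Gm q j r * p r))))
          - (∑ s, pd n s φ q * Gm q s l)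
            * ((1/2) * (pd n l (fun y => g y i j) q
              * ((∑ r, Gm q i r * p r) * (∑ r, Gm q j r * p r))))) :=
          Finset.sum_congr rfl fun i _ => Finset.sum_congr rfl fun j _ =>
            Finset.sum_congr rfl fun l _ => by ring
      _ = _ := by simp only [Finset.sum_add_distrib, Finset.sum_sub_distrib]
  have hA12 : (∑ i, ∑ j, ∑ l, (∑ s, pd n s φ q * Gm q s l)
        * ((1/2) * (pd n j (fun y => g y l i) q
          * ((∑ r, Gm q i r * p r) * (∑ r, Gm q j r * p r)))))
      = ∑ i, ∑ j, ∑ l, (∑ s, pd n s φ q * Gm q s l)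
        * ((1/2) * (pd n i (fun y => g y l j) q
          * ((∑ r, Gm q i r * p r) * (∑ r, Gm q j r * p r)))) := by
    rw [Finset.sum_comm]
    exact Finset.sum_congr rfl fun a _ => Finset.sum_congr rfl fun b _ =>
      Finset.sum_congr rfl fun l _ => by ring
  have h2A1 : (∑ i, ∑ j, ∑ l, (∑ s, pd n s φ q * Gm q s l)
        * ((1/2) * (pd n i (fun y => g y l j) q
          * ((∑ r, Gm q i r * p r) * (∑ r, Gm q j r * p r)))))
      + (∑ i, ∑ j, ∑ l, (∑ s, pd n s φ q * Gm q s l)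
        * ((1/2) * (pd n i (fun y => g y l j) q
          * ((∑ r, Gm q i r * p r) * (∑ r, Gm q j r * p r)))))
      = ∑ c, ∑ k, ∑ l, (∑ s, pd n s φ q * Gm q s k) * pd n c (fun y => g y k l) q
          * (∑ r, Gm q l r * p r) * (∑ j, Gm q c j * p j) := by
    calc _ = ∑ i, ∑ j, ∑ l, ((∑ s, pd n s φ q * Gm q s l) * pd n i (fun y => g y l j) q
            * (∑ r, Gm q j r * p r) * (∑ r, Gm q i r * p r)) := by
          rw [← Finset.sum_add_distrib]
          refine Finset.sum_congr rfl fun i _ => ?_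
          rw [← Finset.sum_add_distrib]
          refine Finset.sum_congr rfl fun j _ => ?_
          rw [← Finset.sum_add_distrib]
          exact Finset.sum_congr rfl fun l _ => by ring
      _ = ∑ i, ∑ l, ∑ j, ((∑ s, pd n s φ q * Gm q s l) * pd n i (fun y => g y l j) q
            * (∑ r, Gm q j r * p r) * (∑ r, Gm q i r * p r)) :=
          Finset.sum_congr rfl fun i _ => Finset.sum_comm
  have hA3 : (∑ i, ∑ j, ∑ l, (∑ s, pd n s φ q * Gm q s l)
        * ((1/2) * (pd n l (fun y => g y i j) q
          * ((∑ r, Gm q i r * p r) * (∑ r, Gm q j r * p r)))))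
      = (1/2) * ∑ c, ∑ k, ∑ l, (∑ s, pd n s φ q * Gm q s c) * (∑ r, Gm q k r * p r)
          * pd n c (fun y => g y k l) q * (∑ r, Gm q l r * p r) := by
    calc (∑ i, ∑ j, ∑ l, (∑ s, pd n s φ q * Gm q s l)
          * ((1/2) * (pd n l (fun y => g y i j) q
            * ((∑ r, Gm q i r * p r) * (∑ r, Gm q j r * p r)))))
        = ∑ l, ∑ i, ∑ j, (∑ s, pd n s φ q * Gm q s l)
          * ((1/2) * (pd n l (fun y => g y i j) q
            * ((∑ r, Gm q i r * p r) * (∑ r, Gm q j r * p r)))) := sum_rot3 _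
      _ = (1/2) * ∑ c, ∑ k, ∑ l, (∑ s, pd n s φ q * Gm q s c) * (∑ r, Gm q k r * p r)
          * pd n c (fun y => g y k l) q * (∑ r, Gm q l r * p r) := by
          rw [const_mul_sum3]
          exact Finset.sum_congr rfl fun c _ => Finset.sum_congr rfl fun k _ =>
            Finset.sum_congr rfl fun l _ => by ring
  have hA : Af q p
      = (∑ c, ∑ k, ∑ l, (∑ s, pd n s φ q * Gm q s k) * pd n c (fun y => g y k l) q
          * (∑ r, Gm q l r * p r) * (∑ j, Gm q c j * p j))
        - (1/2) * (∑ c, ∑ k, ∑ l, (∑ s, pd n s φ q * Gm q s c) * (∑ r, Gm q k r * p r)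
          * pd n c (fun y => g y k l) q * (∑ r, Gm q l r * p r)) := by
    rw [hAfsplit, hA12, h2A1, hA3]
  -- assembling {Φ₁, H}
  have hE : pbr n (Φ 1) H q p
      = -((∑ i, ∑ j, pd n i φ q * Gm q i j * pd n j Vp q)
        - (∑ b, ∑ c, (∑ i, p i * Gm q i b) * pd n b (fun y => pd n c φ y) q
            * (∑ d, Gm q c d * p d))
        + Af q p) := by
    have hsplitsum : ∀ (f g h k : Fin n → ℝ),
        ∑ c, (f c + g c - h c - k c)
          = (∑ c, f c) + (∑ c, g c) - (∑ c, h c) - (∑ c, k c) := by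
      intro f g h k
      rw [Finset.sum_sub_distrib, Finset.sum_sub_distrib, Finset.sum_add_distrib]
    calc pbr n (Φ 1) H q p
        = ∑ c, ((∑ a, ∑ b, pd n c (fun y => pd n a φ y) q * Gm q a b * p b)
              * (∑ j, Gm q c j * p j)
            + (∑ a, ∑ b, pd n a φ q * pd n c (fun y => Gm y a b) q * p b)
              * (∑ j, Gm q c j * p j)
            - (∑ s, pd n s φ q * Gm q s c)
              * ((1/2) * (∑ a, ∑ b, p a * pd n c (fun y => Gm y a b) q * p b))
            - (∑ s, pd n s φ q * Gm q s c) * pd n c Vp q) :=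
          Finset.sum_congr rfl fun c _ => hterm c
      _ = (∑ c, (∑ a, ∑ b, pd n c (fun y => pd n a φ y) q * Gm q a b * p b)
              * (∑ j, Gm q c j * p j))
          + (∑ c, (∑ a, ∑ b, pd n a φ q * pd n c (fun y => Gm y a b) q * p b)
              * (∑ j, Gm q c j * p j))
          - (∑ c, (∑ s, pd n s φ q * Gm q s c)
              * ((1/2) * (∑ a, ∑ b, p a * pd n c (fun y => Gm y a b) q * p b)))
          - (∑ c, (∑ s, pd n s φ q * Gm q s c) * pd n c Vp q) := hsplitsum _ _ _ _
      _ = -((∑ i, ∑ j, pd n i φ q * Gm q i j * pd n j Vp q)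
          - (∑ b, ∑ c, (∑ i, p i * Gm q i b) * pd n b (fun y => pd n c φ y) q
              * (∑ d, Gm q c d * p d))
          + Af q p) := by
          rw [hS1, hS2, hS3, hS4, hA]
          ring
  constructor
  · intro a
    rw [hDbr, Fin.sum_univ_two, Fin.sum_univ_two, Fin.sum_univ_two]
    rw [hbrqΦ0 a, hCinv11, hbrΦ0H]
    ring
  · intro a
    rw [hDbr, Fin.sum_univ_two, Fin.sum_univ_two, Fin.sum_univ_two]
    rw [hbrpΦ0 a, hCinv11, hCinv01, hCinv00, hbrΦ0H, hE, hR a]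
    have hc := hden
    field_simp
    ring
end
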